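/- arXiv:2405.13455 — 8 statements merged into one kernel-verified Lean document; each statement's English description precedes it below -/
import Mathlib

section
/- Let Ψ : [0,∞) → (0,∞) be essentially increasing (i.e., there exists C > 0 such that Ψ(x) ≤ C·Ψ(y) whenever x ≤ y) and satisfy Ψ(x) ≍ Ψ(x²) for all x ≥ 0. Then there exist constants C₁ > 0 and C₂ ∈ ℝ such that Ψ(x) ≤ C₁·(log(e + x))^{C₂} for all x ≥ 0. -/
open MeasureTheory Real Set

/-- `Ψ` is essentially increasing on `[0,∞)`. -/
def EssInc (Ψ : ℝ → ℝ) : Prop := ∃ C > (0:ℝ), ∀ x y : ℝ, 0 ≤ x → x ≤ y → Ψ x ≤ C * Ψ y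

/-- `Ψ` is essentially decreasing on `[0,∞)`. -/
def EssDec (Ψ : ℝ → ℝ) : Prop := ∃ C > (0:ℝ), ∀ x y : ℝ, 0 ≤ x → x ≤ y → Ψ y ≤ C * Ψ x

/-- The doubling property `Ψ(x) ≍ Ψ(x²)` on `[0,∞)`. -/
def Doubling (Ψ : ℝ → ℝ) : Prop :=
  ∃ c > (0:ℝ), ∃ C > (0:ℝ), ∀ x : ℝ, 0 ≤ x → c * Ψ (x ^ 2) ≤ Ψ x ∧ Ψ x ≤ C * Ψ (x ^ 2)

/-- The class `𝓛`: positive, essentially monotonic, doubling. -/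
def InL (Ψ : ℝ → ℝ) : Prop :=
  (∀ x : ℝ, 0 ≤ x → 0 < Ψ x) ∧ (EssInc Ψ ∨ EssDec Ψ) ∧ Doubling Ψ

private lemma key_iter (Ψ : ℝ → ℝ) (C' C₀ : ℝ) (hC' : 1 ≤ C')
    (hd : ∀ x : ℝ, 0 ≤ x → Ψ (x ^ 2) ≤ C' * Ψ x)
    (hi : ∀ x y : ℝ, 0 ≤ x → x ≤ y → Ψ x ≤ C₀ * Ψ y) :
    ∀ n : ℕ, ∀ x : ℝ, 1 ≤ x → Real.log x ≤ 2 ^ n →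
      Ψ x ≤ C' ^ n * (C₀ * Ψ (Real.exp 1)) := by
  intro n
  induction n with
  | zero =>
    intro x hx hlog
    have hx0 : (0:ℝ) < x := lt_of_lt_of_le one_pos hx
    have hxe : x ≤ Real.exp 1 := by
      have := (Real.log_le_iff_le_exp hx0).mp (by simpa using hlog)
      simpa using this
    simpa using hi x (Real.exp 1) (le_of_lt hx0) hxe
  | succ n ih =>
    intro x hx hlog
    have hx0 : (0:ℝ) ≤ x := le_trans zero_le_one hx
    set y := Real.sqrt x with hy
    have hy1 : 1 ≤ y := by
      rw [hy, show (1:ℝ) = Real.sqrt 1 by simp]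
      exact Real.sqrt_le_sqrt hx
    have hylog : Real.log y ≤ 2 ^ n := by
      rw [hy, Real.log_sqrt hx0]
      linarith [hlog, (by ring_nf : (2:ℝ) ^ (n+1) = 2 * 2 ^ n)]
    have hIH := ih y hy1 hylog
    have hsq : y ^ 2 = x := Real.sq_sqrt hx0
    have h1 : Ψ x ≤ C' * Ψ y := by
      have := hd y (le_trans zero_le_one hy1)
      rwa [hsq] at this
    calc Ψ x ≤ C' * Ψ y := h1
      _ ≤ C' * (C' ^ n * (C₀ * Ψ (Real.exp 1))) :=
          mul_le_mul_of_nonneg_left hIH (le_trans zero_le_one hC')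
      _ = C' ^ (n + 1) * (C₀ * Ψ (Real.exp 1)) := by ring

theorem stmt0 (Ψ : ℝ → ℝ) (hpos : ∀ x : ℝ, 0 ≤ x → 0 < Ψ x)
    (hinc : EssInc Ψ) (hdbl : Doubling Ψ) :
    ∃ C₁ > (0:ℝ), ∃ C₂ : ℝ, ∀ x : ℝ, 0 ≤ x →
      Ψ x ≤ C₁ * Real.log (Real.exp 1 + x) ^ C₂ := by
  obtain ⟨c, hc, C, hC, hdc⟩ := hdbl
  obtain ⟨C₀', hC₀', hi'⟩ := hinc
  set C₀ : ℝ := max C₀' 1 with hC₀def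
  have hC₀1 : 1 ≤ C₀ := le_max_right _ _
  have hC₀0 : 0 < C₀ := lt_of_lt_of_le one_pos hC₀1
  have hi : ∀ x y : ℝ, 0 ≤ x → x ≤ y → Ψ x ≤ C₀ * Ψ y := by
    intro x y hx hxy
    refine le_trans (hi' x y hx hxy) ?_
    exact mul_le_mul_of_nonneg_right (le_max_left _ _)
      (le_of_lt (hpos y (le_trans hx hxy)))
  set C' : ℝ := max (1 / c) 1 with hC'def
  have hC'1 : 1 ≤ C' := le_max_right _ _
  have hC'0 : 0 < C' := lt_of_lt_of_le one_pos hC'1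
  have hd : ∀ x : ℝ, 0 ≤ x → Ψ (x ^ 2) ≤ C' * Ψ x := by
    intro x hx
    have h := (hdc x hx).1
    have h1 : Ψ (x ^ 2) ≤ (1 / c) * Ψ x := by
      rw [div_mul_eq_mul_div, le_div_iff₀ hc, mul_comm]
      linarith
    refine le_trans h1 ?_
    exact mul_le_mul_of_nonneg_right (le_max_left _ _)
      (le_of_lt (hpos x hx))
  have hΨe : 0 < Ψ (Real.exp 1) := hpos _ (le_of_lt (Real.exp_pos 1))
  set K : ℝ := C₀ * Ψ (Real.exp 1) with hKdef
  have hK0 : 0 < K := mul_pos hC₀0 hΨe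
  set C₂ : ℝ := Real.logb 2 C' with hC₂def
  have hC₂0 : 0 ≤ C₂ := Real.logb_nonneg one_lt_two hC'1
  have h2C₂ : (2:ℝ) ^ C₂ = C' := Real.rpow_logb two_pos (by norm_num) hC'0
  refine ⟨K * (2:ℝ) ^ C₂, mul_pos hK0 (Real.rpow_pos_of_pos two_pos _), C₂, ?_⟩
  intro x hx
  set L : ℝ := Real.log (Real.exp 1 + x) with hLdef
  have hL1 : 1 ≤ L := by
    rw [hLdef]
    have : Real.exp 1 ≤ Real.exp 1 + x := by linarith
    calc (1:ℝ) = Real.log (Real.exp 1) := by simp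
      _ ≤ L := Real.log_le_log (Real.exp_pos 1) this
  have hL0 : 0 < L := lt_of_lt_of_le one_pos hL1
  have hLpow1 : 1 ≤ L ^ C₂ := Real.one_le_rpow hL1 hC₂0
  by_cases hx1 : x ≤ 1
  · -- small x: Ψ x ≤ K ≤ K * 2^C₂ * L^C₂
    have hxe : x ≤ Real.exp 1 := le_trans hx1 (by
      have := Real.add_one_le_exp 1; linarith)
    have h1 : Ψ x ≤ K := by simpa using hi x (Real.exp 1) hx hxe
    have h2 : (1:ℝ) ≤ (2:ℝ) ^ C₂ * L ^ C₂ := by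
      have : (1:ℝ) ≤ (2:ℝ) ^ C₂ := Real.one_le_rpow one_le_two hC₂0
      nlinarith
    calc Ψ x ≤ K := h1
      _ = K * 1 := by ring
      _ ≤ K * ((2:ℝ) ^ C₂ * L ^ C₂) := by
          exact mul_le_mul_of_nonneg_left h2 (le_of_lt hK0)
      _ = K * (2:ℝ) ^ C₂ * L ^ C₂ := by ring
  · push_neg at hx1
    have hx1' : (1:ℝ) ≤ x := le_of_lt hx1
    -- find n with log x ≤ 2^n and 2^n ≤ 2 * L
    have hex : ∃ n : ℕ, Real.log x ≤ (2:ℝ) ^ n := by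
      obtain ⟨n, hn⟩ := pow_unbounded_of_one_lt (Real.log x) (one_lt_two (α := ℝ))
      exact ⟨n, le_of_lt hn⟩
    set n := Nat.find hex with hn
    have hn1 : Real.log x ≤ (2:ℝ) ^ n := Nat.find_spec hex
    have hlogL : Real.log x ≤ L := by
      rw [hLdef]
      exact Real.log_le_log (by linarith) (by linarith [Real.exp_pos 1])
    have hn2 : (2:ℝ) ^ n ≤ 2 * L := by
      rcases Nat.eq_zero_or_pos n with h0 | hp
      · rw [h0]; simp; linarith
      · have hm : ¬ Real.log x ≤ (2:ℝ) ^ (n - 1) :=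
          Nat.find_min hex (by omega)
        push_neg at hm
        have he : n = (n - 1) + 1 := by omega
        rw [he, pow_succ]
        nlinarith
    have hkey := key_iter Ψ C' C₀ hC'1 hd hi n x hx1' hn1
    have hCn : C' ^ n ≤ (2 * L) ^ C₂ := by
      have h1 : C' ^ n = ((2:ℝ) ^ (n:ℕ) : ℝ) ^ C₂ := by
        rw [← h2C₂, ← Real.rpow_natCast ((2:ℝ) ^ C₂) n,
          ← Real.rpow_natCast (2:ℝ) n, ← Real.rpow_mul (by norm_num),
          ← Real.rpow_mul (by norm_num), mul_comm]
      rw [h1]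
      exact Real.rpow_le_rpow (by positivity) hn2 hC₂0
    have hmul : (2 * L) ^ C₂ = (2:ℝ) ^ C₂ * L ^ C₂ :=
      Real.mul_rpow (by norm_num) (le_of_lt hL0)
    calc Ψ x ≤ C' ^ n * K := hkey
      _ ≤ (2 * L) ^ C₂ * K := by
          exact mul_le_mul_of_nonneg_right hCn (le_of_lt hK0)
      _ = K * (2:ℝ) ^ C₂ * L ^ C₂ := by rw [hmul]; ring
end

section
/- Let Ψ : [0,∞) → (0,∞) be essentially monotonic and satisfy Ψ(x) ≍ Ψ(x²) for all x ≥ 0. Then there exist constants c₁, C₁ > 0 and c₂, C₂ ∈ ℝ such that c₁·(log(e + x))^{c₂} ≤ Ψ(x) ≤ C₁·(log(e + x))^{C₂} for all x ≥ 0. -/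
open MeasureTheory Real Set

lemma aux_iter_up (Ψ : ℝ → ℝ) (C : ℝ) (hC : 0 < C)
    (h : ∀ x : ℝ, 0 ≤ x → Ψ x ≤ C * Ψ (x ^ 2)) :
    ∀ n : ℕ, ∀ y : ℝ, 0 ≤ y → Ψ y ≤ C ^ n * Ψ (y ^ 2 ^ n) := by
  intro n
  induction n with
  | zero => intro y hy; simp
  | succ n ih =>
    intro y hy
    calc Ψ y ≤ C ^ n * Ψ (y ^ 2 ^ n) := ih y hy
      _ ≤ C ^ n * (C * Ψ ((y ^ 2 ^ n) ^ 2)) :=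
          mul_le_mul_of_nonneg_left (h (y ^ 2 ^ n) (pow_nonneg hy _)) (by positivity)
      _ = C ^ (n+1) * Ψ (y ^ 2 ^ (n+1)) := by rw [← pow_mul, ← pow_succ]; ring

lemma aux_iter_low (Ψ : ℝ → ℝ) (c : ℝ) (hc : 0 < c)
    (h : ∀ x : ℝ, 0 ≤ x → c * Ψ (x ^ 2) ≤ Ψ x) :
    ∀ n : ℕ, ∀ y : ℝ, 0 ≤ y → c ^ n * Ψ (y ^ 2 ^ n) ≤ Ψ y := by
  intro n
  induction n with
  | zero => intro y hy; simp
  | succ n ih =>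
    intro y hy
    calc c ^ (n+1) * Ψ (y ^ 2 ^ (n+1)) = c ^ n * (c * Ψ ((y ^ 2 ^ n) ^ 2)) := by
          rw [← pow_mul, ← pow_succ]; ring
      _ ≤ c ^ n * Ψ (y ^ 2 ^ n) :=
          mul_le_mul_of_nonneg_left (h (y ^ 2 ^ n) (pow_nonneg hy _)) (by positivity)
      _ ≤ Ψ y := ih y hy

lemma aux_pow_le_rpow {a t : ℝ} (ha : 1 ≤ a) (n : ℕ) (h2n : ((2:ℝ))^n ≤ t) :
    a ^ n ≤ t ^ Real.logb 2 a := by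
  have ha0 : 0 < a := lt_of_lt_of_le one_pos ha
  have hβ : 0 ≤ Real.logb 2 a := Real.logb_nonneg one_lt_two ha
  calc a ^ n = ((2:ℝ) ^ Real.logb 2 a) ^ n := by
        rw [Real.rpow_logb two_pos (by norm_num) ha0]
    _ = ((2:ℝ) ^ (n:ℝ)) ^ Real.logb 2 a := by
        rw [← Real.rpow_natCast ((2:ℝ) ^ Real.logb 2 a) n, ← Real.rpow_mul (by norm_num),
          mul_comm, Real.rpow_mul (by norm_num : (0:ℝ) ≤ 2)]
    _ ≤ t ^ Real.logb 2 a := by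
        apply Real.rpow_le_rpow (by positivity) _ hβ
        rwa [Real.rpow_natCast]

lemma key_inc (Ψ : ℝ → ℝ) (hpos : ∀ x : ℝ, 0 ≤ x → 0 < Ψ x)
    (hinc : EssInc Ψ) (hdbl : Doubling Ψ) :
    ∃ c₁ > (0:ℝ), ∃ C₁ > (0:ℝ), ∃ c₂ C₂ : ℝ, ∀ x : ℝ, 0 ≤ x →
      c₁ * Real.log (Real.exp 1 + x) ^ c₂ ≤ Ψ x ∧
      Ψ x ≤ C₁ * Real.log (Real.exp 1 + x) ^ C₂ := by
  obtain ⟨A, hA, hAm⟩ := hinc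
  obtain ⟨c0, hc0, C0, hC0, hdb⟩ := hdbl
  set c : ℝ := min c0 1 with hc_def
  set C : ℝ := max C0 1 with hC_def
  have hc : 0 < c := lt_min hc0 one_pos
  have hc1 : c ≤ 1 := min_le_right _ _
  have hC1 : 1 ≤ C := le_max_right _ _
  have hC : 0 < C := lt_of_lt_of_le one_pos hC1
  have hlow : ∀ x : ℝ, 0 ≤ x → c * Ψ (x ^ 2) ≤ Ψ x := fun x hx =>
    le_trans (mul_le_mul_of_nonneg_right (min_le_left c0 1)
      (le_of_lt (hpos _ (by positivity)))) (hdb x hx).1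
  have hup : ∀ x : ℝ, 0 ≤ x → Ψ x ≤ C * Ψ (x ^ 2) := fun x hx =>
    le_trans (hdb x hx).2 (mul_le_mul_of_nonneg_right (le_max_left C0 1)
      (le_of_lt (hpos _ (by positivity))))
  have iterlow := aux_iter_low Ψ c hc hlow
  have iterup := aux_iter_up Ψ C hC hup
  set α : ℝ := Real.logb 2 c⁻¹ with hα_def
  set β : ℝ := Real.logb 2 C with hβ_def
  have hc1' : 1 ≤ c⁻¹ := one_le_inv_iff₀.2 ⟨hc, hc1⟩
  have hα : 0 ≤ α := Real.logb_nonneg one_lt_two hc1'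
  have hβ : 0 ≤ β := Real.logb_nonneg one_lt_two hC1
  have he0 : (0:ℝ) ≤ Real.exp 1 := (Real.exp_pos 1).le
  have hΨ0 : 0 < Ψ 0 := hpos 0 le_rfl
  have hΨe : 0 < Ψ (Real.exp 1) := hpos _ he0
  have hΨe2 : 0 < Ψ (Real.exp 2) := hpos _ (Real.exp_pos 2).le
  refine ⟨min (A⁻¹ * Ψ 0) (A⁻¹ * Ψ (Real.exp 1)), by positivity,
    max (A * Ψ (Real.exp 1)) (A * Ψ (Real.exp 2)), by positivity, -β, α, ?_⟩
  intro x hx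
  have hL1 : 1 ≤ Real.log (Real.exp 1 + x) := by
    rw [Real.le_log_iff_exp_le (by positivity)]
    linarith
  have hL0 : 0 < Real.log (Real.exp 1 + x) := lt_of_lt_of_le one_pos hL1
  set L : ℝ := Real.log (Real.exp 1 + x) with hL_def
  have hLβ : (1:ℝ) ≤ L ^ β := Real.one_le_rpow hL1 hβ
  have hLα : (1:ℝ) ≤ L ^ α := Real.one_le_rpow hL1 hα
  rcases le_or_gt x (Real.exp 1) with hxe | hxe
  · constructor
    · have h2 : A⁻¹ * Ψ 0 ≤ Ψ x := by
        rw [inv_mul_le_iff₀ hA]; exact hAm 0 x le_rfl hx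
      have h3 : L ^ (-β) ≤ 1 := by
        rw [Real.rpow_neg hL0.le]
        exact inv_le_one_of_one_le₀ hLβ
      calc min (A⁻¹ * Ψ 0) (A⁻¹ * Ψ (Real.exp 1)) * L ^ (-β)
          ≤ (A⁻¹ * Ψ 0) * 1 :=
            mul_le_mul (min_le_left _ _) h3 (by positivity) (by positivity)
        _ = A⁻¹ * Ψ 0 := mul_one _
        _ ≤ Ψ x := h2
    · calc Ψ x ≤ A * Ψ (Real.exp 1) := hAm x _ hx hxe
        _ = (A * Ψ (Real.exp 1)) * 1 := (mul_one _).symm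
        _ ≤ max (A * Ψ (Real.exp 1)) (A * Ψ (Real.exp 2)) * L ^ α :=
            mul_le_mul (le_max_left _ _) hLα one_pos.le (by positivity)
  · have hx0 : 0 < x := lt_trans (Real.exp_pos 1) hxe
    set t : ℝ := Real.log x with ht_def
    have ht1 : 1 ≤ t := by
      rw [ht_def, Real.le_log_iff_exp_le hx0]; exact hxe.le
    have htL : t ≤ L := Real.log_le_log hx0 (by linarith)
    have ht0 : 0 ≤ t := le_trans one_pos.le ht1
    set n : ℕ := Nat.log 2 ⌊t⌋₊ with hn_def
    have hfl1 : 1 ≤ ⌊t⌋₊ := Nat.le_floor (by exact_mod_cast ht1)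
    have h2nt : ((2:ℝ))^n ≤ t := by
      have h1 : (2:ℕ)^n ≤ ⌊t⌋₊ := Nat.pow_log_le_self 2 (by omega)
      calc ((2:ℝ))^n = ((2^n : ℕ) : ℝ) := by push_cast; ring
        _ ≤ (⌊t⌋₊ : ℝ) := by exact_mod_cast h1
        _ ≤ t := Nat.floor_le ht0
    have ht2n : t < ((2:ℝ))^(n+1) := by
      have h1 : ⌊t⌋₊ < 2^(n+1) := Nat.lt_pow_succ_log_self one_lt_two _
      calc t < (⌊t⌋₊ : ℝ) + 1 := Nat.lt_floor_add_one t
        _ ≤ ((2:ℝ))^(n+1) := by exact_mod_cast Nat.succ_le_of_lt h1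
    set y : ℝ := Real.exp (t / 2^n) with hy_def
    have h2npos : (0:ℝ) < 2^n := by positivity
    have hyx : y ^ 2^n = x := by
      rw [hy_def, ← Real.exp_nat_mul]
      rw [show ((2^n : ℕ) : ℝ) * (t / 2^n) = t by push_cast; field_simp]
      exact Real.exp_log hx0
    have hye : Real.exp 1 ≤ y := by
      rw [hy_def, Real.exp_le_exp, le_div_iff₀ h2npos]; linarith
    have hye2 : y ≤ Real.exp 2 := by
      rw [hy_def, Real.exp_le_exp, div_le_iff₀ h2npos]
      have h21 : ((2:ℝ))^(n+1) = 2^n * 2 := pow_succ 2 n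
      linarith
    have hy0 : 0 ≤ y := (Real.exp_pos _).le
    constructor
    · -- lower bound
      have h1 : Ψ y ≤ C ^ n * Ψ x := by
        have := iterup n y hy0; rwa [hyx] at this
      have hCn : C ^ n ≤ L ^ β := le_trans (aux_pow_le_rpow hC1 n h2nt)
        (Real.rpow_le_rpow ht0 htL hβ)
      have h4 : A⁻¹ * Ψ (Real.exp 1) ≤ L ^ β * Ψ x := by
        rw [inv_mul_le_iff₀ hA]
        calc Ψ (Real.exp 1) ≤ A * Ψ y := hAm _ y he0 hye
          _ ≤ A * (C ^ n * Ψ x) := mul_le_mul_of_nonneg_left h1 hA.le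
          _ ≤ A * (L ^ β * Ψ x) := mul_le_mul_of_nonneg_left
              (mul_le_mul_of_nonneg_right hCn (hpos x hx).le) hA.le
      rw [Real.rpow_neg hL0.le]
      have hLβpos : (0:ℝ) < L ^ β := by positivity
      calc min (A⁻¹ * Ψ 0) (A⁻¹ * Ψ (Real.exp 1)) * (L ^ β)⁻¹
          ≤ (A⁻¹ * Ψ (Real.exp 1)) * (L ^ β)⁻¹ :=
            mul_le_mul_of_nonneg_right (min_le_right _ _) (by positivity)
        _ ≤ Ψ x := by
            rw [mul_inv_le_iff₀ hLβpos]
            exact h4.trans_eq (mul_comm _ _)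
    · -- upper bound
      have h1 : c ^ n * Ψ x ≤ Ψ y := by
        have := iterlow n y hy0; rwa [hyx] at this
      have hcn : (c⁻¹) ^ n ≤ L ^ α := le_trans (aux_pow_le_rpow hc1' n h2nt)
        (Real.rpow_le_rpow ht0 htL hα)
      have hcnpos : (0:ℝ) < c ^ n := by positivity
      calc Ψ x ≤ (c ^ n)⁻¹ * Ψ y := (le_inv_mul_iff₀ hcnpos).2 h1
        _ = (c⁻¹) ^ n * Ψ y := by rw [inv_pow]
        _ ≤ L ^ α * (A * Ψ (Real.exp 2)) :=
            mul_le_mul hcn (hAm y _ hy0 hye2) (hpos y hy0).le (by positivity)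
        _ = (A * Ψ (Real.exp 2)) * L ^ α := mul_comm _ _
        _ ≤ max (A * Ψ (Real.exp 1)) (A * Ψ (Real.exp 2)) * L ^ α :=
            mul_le_mul_of_nonneg_right (le_max_right _ _) (by positivity)

theorem stmt1 (Ψ : ℝ → ℝ) (hpos : ∀ x : ℝ, 0 ≤ x → 0 < Ψ x)
    (hmono : EssInc Ψ ∨ EssDec Ψ) (hdbl : Doubling Ψ) :
    ∃ c₁ > (0:ℝ), ∃ C₁ > (0:ℝ), ∃ c₂ C₂ : ℝ, ∀ x : ℝ, 0 ≤ x →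
      c₁ * Real.log (Real.exp 1 + x) ^ c₂ ≤ Ψ x ∧
      Ψ x ≤ C₁ * Real.log (Real.exp 1 + x) ^ C₂ := by
  rcases hmono with hinc | hdec
  · exact key_inc Ψ hpos hinc hdbl
  · -- apply key_inc to the reciprocal
    set Φ : ℝ → ℝ := fun x => (Ψ x)⁻¹ with hΦ_def
    have hΦpos : ∀ x : ℝ, 0 ≤ x → 0 < Φ x := fun x hx => by
      simp only [hΦ_def]; exact inv_pos.2 (hpos x hx)
    have hΦinc : EssInc Φ := by
      obtain ⟨A, hA, hAm⟩ := hdec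
      refine ⟨A, hA, fun x y hx hxy => ?_⟩
      have hx' := hpos x hx
      have hy' := hpos y (hx.trans hxy)
      simp only [hΦ_def]
      rw [← one_div, ← div_eq_mul_inv, div_le_div_iff₀ hx' hy']
      have := hAm x y hx hxy
      nlinarith
    have hΦdbl : Doubling Φ := by
      obtain ⟨c0, hc0, C0, hC0, hdb⟩ := hdbl
      refine ⟨C0⁻¹, by positivity, c0⁻¹, by positivity, fun x hx => ?_⟩
      have hx2 : (0:ℝ) ≤ x ^ 2 := by positivity
      have h1 := (hdb x hx).1
      have h2 := (hdb x hx).2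
      have hx' := hpos x hx
      have hx2' := hpos _ hx2
      constructor
      · simp only [hΦ_def]
        rw [← mul_inv]
        exact inv_anti₀ hx' h2
      · simp only [hΦ_def]
        rw [← mul_inv]
        apply inv_anti₀ (by positivity) h1
    obtain ⟨c₁, hc₁, C₁, hC₁, c₂, C₂, hb⟩ := key_inc Φ hΦpos hΦinc hΦdbl
    refine ⟨C₁⁻¹, by positivity, c₁⁻¹, by positivity, -C₂, -c₂, fun x hx => ?_⟩
    obtain ⟨hb1, hb2⟩ := hb x hx
    have hx' := hpos x hx
    have hL1 : 1 ≤ Real.log (Real.exp 1 + x) := by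
      rw [Real.le_log_iff_exp_le (by positivity)]
      linarith
    have hL0 : 0 < Real.log (Real.exp 1 + x) := lt_of_lt_of_le one_pos hL1
    set L : ℝ := Real.log (Real.exp 1 + x) with hL_def
    simp only [hΦ_def] at hb1 hb2
    constructor
    · have h3 : (C₁ * L ^ C₂)⁻¹ ≤ Ψ x := by
        have := inv_anti₀ (inv_pos.2 hx') hb2
        rwa [inv_inv] at this
      calc C₁⁻¹ * L ^ (-C₂) = (C₁ * L ^ C₂)⁻¹ := by
            rw [mul_inv, Real.rpow_neg hL0.le]
        _ ≤ Ψ x := h3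
    · have h3 : Ψ x ≤ (c₁ * L ^ c₂)⁻¹ := by
        have := inv_anti₀ (by positivity) hb1
        rwa [inv_inv] at this
      calc Ψ x ≤ (c₁ * L ^ c₂)⁻¹ := h3
        _ = c₁⁻¹ * L ^ (-c₂) := by rw [mul_inv, Real.rpow_neg hL0.le]
end

section
/- Let Φ, Ψ ∈ 𝓛. Then Ψ(x/Φ(x)) ≍ Ψ(x) for all x ≥ 0, i.e., there exists C > 0 depending only on Φ and Ψ such that C⁻¹·Ψ(x) ≤ Ψ(x/Φ(x)) ≤ C·Ψ(x) for all x ≥ 0. -/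
open MeasureTheory Real Set

/-! Iterating `Φ x ≲ Φ √x` shows that every `Φ ∈ 𝓛` grows at most like a power of `log x`.
Applied to `Φ` and to `1 / Φ ∈ 𝓛`, this gives `√x ≤ x / Φ x ≤ x ^ 2` for large `x`, and since `Ψ`
is essentially monotone with `Ψ √x ≍ Ψ x ≍ Ψ (x ^ 2)`, also `Ψ (x / Φ x) ≍ Ψ x` there. On a
bounded interval `[0, X]` both sides are bounded above and below by positive constants. -/

open Filter Asymptotics

lemma inv_le_mul_inv_of_le_mul {a b A : ℝ} (ha : 0 < a) (hb : 0 < b) (h : a ≤ A * b) :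
    b⁻¹ ≤ A * a⁻¹ := by
  rw [← div_eq_mul_inv, le_div_iff₀ ha, inv_mul_eq_div, div_le_iff₀ hb]
  exact h

lemma isTheta_principal_iff {α : Type*} {f g : α → ℝ} {s : Set α} (hf : ∀ x ∈ s, 0 ≤ f x)
    (hg : ∀ x ∈ s, 0 ≤ g x) :
    f =Θ[𝓟 s] g ↔ ∃ c > 0, ∃ C > 0, ∀ x ∈ s, c * g x ≤ f x ∧ f x ≤ C * g x := by
  constructor
  · rintro ⟨hfg, hgf⟩
    obtain ⟨C, hC, hfg⟩ := hfg.exists_pos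
    obtain ⟨c, hc, hgf⟩ := hgf.exists_pos
    rw [isBigOWith_principal] at hfg hgf
    refine ⟨c⁻¹, inv_pos.2 hc, C, hC, fun x hx => ⟨?_, ?_⟩⟩
    · simpa only [norm_of_nonneg (hg x hx), norm_of_nonneg (hf x hx), inv_mul_le_iff₀ hc]
        using hgf x hx
    · simpa only [norm_of_nonneg (hg x hx), norm_of_nonneg (hf x hx)] using hfg x hx
  · rintro ⟨c, hc, C, -, h⟩
    refine ⟨isBigO_principal.2 ⟨C, fun x hx => ?_⟩, isBigO_principal.2 ⟨c⁻¹, fun x hx => ?_⟩⟩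
    · rw [norm_of_nonneg (hg x hx), norm_of_nonneg (hf x hx)]
      exact (h x hx).2
    · rw [norm_of_nonneg (hg x hx), norm_of_nonneg (hf x hx), le_inv_mul_iff₀ hc]
      exact (h x hx).1

section

variable {Ψ : ℝ → ℝ}

lemma doubling_iff_isTheta (hpos : ∀ x, 0 ≤ x → 0 < Ψ x) :
    Doubling Ψ ↔ Ψ =Θ[𝓟 (Ici 0)] fun x => Ψ (x ^ 2) :=
  (isTheta_principal_iff (fun x hx => (hpos x hx).le) fun x _ => (hpos _ (sq_nonneg x)).le).symm

lemma Doubling.isTheta_comp_sq (hpos : ∀ x, 0 ≤ x → 0 < Ψ x) (hd : Doubling Ψ) :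
    (fun x => Ψ (x ^ 2)) =Θ[𝓟 (Ici 0)] Ψ :=
  ((doubling_iff_isTheta hpos).1 hd).symm

lemma Doubling.isTheta_comp_sqrt (hpos : ∀ x, 0 ≤ x → 0 < Ψ x) (hd : Doubling Ψ) :
    (fun x => Ψ √x) =Θ[𝓟 (Ici 0)] Ψ := by
  obtain ⟨c, hc, C, hC, hd⟩ := hd
  refine (isTheta_principal_iff (fun x _ => (hpos _ (sqrt_nonneg x)).le)
    fun x hx => (hpos x hx).le).2 ⟨c, hc, C, hC, fun x hx => ?_⟩
  simpa only [sq_sqrt hx] using hd √x (sqrt_nonneg x)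

lemma EssInc.inv (hpos : ∀ x, 0 ≤ x → 0 < Ψ x) (h : EssInc Ψ) : EssDec fun x => (Ψ x)⁻¹ := by
  obtain ⟨A, hA, h⟩ := h
  exact ⟨A, hA, fun x y hx hxy =>
    inv_le_mul_inv_of_le_mul (hpos x hx) (hpos y (hx.trans hxy)) (h x y hx hxy)⟩

lemma EssDec.inv (hpos : ∀ x, 0 ≤ x → 0 < Ψ x) (h : EssDec Ψ) : EssInc fun x => (Ψ x)⁻¹ := by
  obtain ⟨A, hA, h⟩ := h
  exact ⟨A, hA, fun x y hx hxy =>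
    inv_le_mul_inv_of_le_mul (hpos y (hx.trans hxy)) (hpos x hx) (h x y hx hxy)⟩

lemma EssInc.exists_le_mul_log_pow (hpos : ∀ x, 0 ≤ x → 0 < Ψ x) (hinc : EssInc Ψ)
    (hd : Doubling Ψ) : ∃ K : ℝ, ∃ p : ℕ, ∀ x, 2 ≤ x → Ψ x ≤ K * log x ^ p := by
  obtain ⟨A, hA, hmono⟩ := hinc
  obtain ⟨c, hc, _, _, hd⟩ := hd
  obtain ⟨p, hp⟩ := pow_unbounded_of_one_lt c⁻¹ one_lt_two
  have hΨ4 := hpos 4 (by norm_num)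
  set K := A * Ψ 4 / log 2 ^ p
  have small : ∀ x, 2 ≤ x → x ≤ 4 → Ψ x ≤ K * log x ^ p := fun x h2 h4 =>
    calc Ψ x ≤ A * Ψ 4 := hmono x 4 (by linarith) h4
      _ = K * log 2 ^ p := (div_mul_cancel₀ _ (by positivity)).symm
      _ ≤ K * log x ^ p := by gcongr
  -- `c * Ψ (x ^ 2) ≤ Ψ x` and `log √x = log x / 2`: the bound survives squaring since `c⁻¹ < 2 ^ p`
  have square : ∀ x, 4 < x → Ψ √x ≤ K * log √x ^ p → Ψ x ≤ K * log x ^ p := by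
    intro x hx h
    have hx0 : 0 ≤ x := by linarith
    have hlogx : 0 ≤ log x := log_nonneg (by linarith)
    have hsq := (hd √x (sqrt_nonneg x)).1
    rw [sq_sqrt hx0, ← le_inv_mul_iff₀ hc] at hsq
    calc Ψ x ≤ c⁻¹ * (K * log √x ^ p) := hsq.trans (by gcongr)
      _ = c⁻¹ / 2 ^ p * (K * log x ^ p) := by rw [log_sqrt hx0, div_pow]; ring
      _ ≤ 1 * (K * log x ^ p) := by
          gcongr
          exact (div_le_one (by positivity)).2 hp.le
      _ = K * log x ^ p := one_mul _
  have hiter : ∀ n : ℕ, ∀ x, 2 ≤ x → x ≤ 2 ^ 2 ^ n → Ψ x ≤ K * log x ^ p := by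
    intro n
    induction n with
    | zero => exact fun x h2 hx => small x h2 (by norm_num at hx; linarith)
    | succ n ih =>
      intro x h2 hx
      rcases le_or_gt x 4 with h4 | h4
      · exact small x h2 h4
      refine square x h4 (ih √x ?_ ?_)
      · rw [le_sqrt (by norm_num) (by linarith)]
        linarith
      · rwa [sqrt_le_left (by positivity), ← pow_mul, ← pow_succ]
  refine ⟨K, p, fun x hx => ?_⟩
  obtain ⟨n, hn⟩ := pow_unbounded_of_one_lt x one_lt_two
  exact hiter n x hx (hn.le.trans (pow_le_pow_right₀ one_le_two Nat.lt_two_pow_self.le))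

end

namespace InL

variable {Φ : ℝ → ℝ}

lemma inv (h : InL Φ) : InL fun x => (Φ x)⁻¹ := by
  obtain ⟨hpos, hmono, hd⟩ := h
  have hpos' : ∀ x, 0 ≤ x → 0 < (Φ x)⁻¹ := fun x hx => inv_pos.2 (hpos x hx)
  refine ⟨hpos', hmono.symm.imp (EssDec.inv hpos) (EssInc.inv hpos), ?_⟩
  rw [doubling_iff_isTheta hpos']
  exact ((doubling_iff_isTheta hpos).1 hd).inv

lemma exists_isBigO_log_pow (h : InL Φ) : ∃ p : ℕ, Φ =O[atTop] fun x => log x ^ p := by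
  obtain ⟨hpos, hinc | ⟨A, -, hdec⟩, hd⟩ := h
  · obtain ⟨K, p, hK⟩ := hinc.exists_le_mul_log_pow hpos hd
    refine ⟨p, .of_bound K ?_⟩
    filter_upwards [eventually_ge_atTop 2] with x hx
    rw [norm_of_nonneg (hpos x (by linarith)).le,
      norm_of_nonneg (pow_nonneg (log_nonneg (by linarith)) p)]
    exact hK x hx
  · refine ⟨0, .of_bound (A * Φ 0) ?_⟩
    filter_upwards [eventually_ge_atTop 0] with x hx
    simpa [norm_of_nonneg (hpos x hx).le] using hdec 0 x le_rfl hx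

lemma isLittleO_sqrt (h : InL Φ) : Φ =o[atTop] Real.sqrt := by
  obtain ⟨p, hp⟩ := h.exists_isBigO_log_pow
  refine hp.trans_isLittleO ?_
  simpa only [rpow_natCast, ← sqrt_eq_rpow] using isLittleO_log_rpow_rpow_atTop (p : ℝ) one_half_pos

lemma eventually_sqrt_le_div_le_sq (h : InL Φ) :
    ∀ᶠ x in atTop, √x ≤ x / Φ x ∧ x / Φ x ≤ x ^ 2 := by
  filter_upwards [h.isLittleO_sqrt.bound one_pos, h.inv.isLittleO_sqrt.bound one_pos,
    eventually_ge_atTop 1] with x hΦ hΦinv hx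
  have hΦx := h.1 x (by linarith)
  rw [one_mul, norm_of_nonneg hΦx.le, norm_of_nonneg (sqrt_nonneg x)] at hΦ
  rw [one_mul, norm_of_nonneg (inv_pos.2 hΦx).le, norm_of_nonneg (sqrt_nonneg x)] at hΦinv
  constructor
  · rw [le_div_iff₀ hΦx]
    calc √x * Φ x ≤ √x * √x := by gcongr
      _ = x := mul_self_sqrt (by linarith)
  · calc x / Φ x = x * (Φ x)⁻¹ := div_eq_mul_inv x (Φ x)
      _ ≤ x * x := by gcongr; exact hΦinv.trans (sqrt_le_self_iff.2 (Or.inr hx))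
      _ = x ^ 2 := (sq x).symm

end InL

section Comparison

variable {α : Type*} {l : Filter α} {Ψ : ℝ → ℝ} {a b : α → ℝ}

lemma EssInc.isBigO_comp (hpos : ∀ x, 0 ≤ x → 0 < Ψ x) (h : EssInc Ψ)
    (ha : ∀ᶠ x in l, 0 ≤ a x) (hab : ∀ᶠ x in l, a x ≤ b x) :
    (fun x => Ψ (a x)) =O[l] fun x => Ψ (b x) := by
  obtain ⟨A, -, h⟩ := h
  refine .of_bound A ?_
  filter_upwards [ha, hab] with x ha hab
  rw [norm_of_nonneg (hpos _ ha).le, norm_of_nonneg (hpos _ (ha.trans hab)).le]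
  exact h _ _ ha hab

lemma EssDec.isBigO_comp (hpos : ∀ x, 0 ≤ x → 0 < Ψ x) (h : EssDec Ψ)
    (ha : ∀ᶠ x in l, 0 ≤ a x) (hab : ∀ᶠ x in l, a x ≤ b x) :
    (fun x => Ψ (b x)) =O[l] fun x => Ψ (a x) := by
  obtain ⟨A, -, h⟩ := h
  refine .of_bound A ?_
  filter_upwards [ha, hab] with x ha hab
  rw [norm_of_nonneg (hpos _ ha).le, norm_of_nonneg (hpos _ (ha.trans hab)).le]
  exact h _ _ ha hab

lemma isTheta_comp_of_le_of_le (hpos : ∀ x, 0 ≤ x → 0 < Ψ x) (hmono : EssInc Ψ ∨ EssDec Ψ)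
    {t : α → ℝ} {f : α → ℝ} (ha : ∀ᶠ x in l, 0 ≤ a x) (hat : ∀ᶠ x in l, a x ≤ t x)
    (htb : ∀ᶠ x in l, t x ≤ b x) (hfa : (fun x => Ψ (a x)) =Θ[l] f)
    (hfb : (fun x => Ψ (b x)) =Θ[l] f) : (fun x => Ψ (t x)) =Θ[l] f := by
  have ht : ∀ᶠ x in l, 0 ≤ t x := (ha.and hat).mono fun x h => h.1.trans h.2
  rcases hmono with hinc | hdec
  · exact ⟨(hinc.isBigO_comp hpos ht htb).trans hfb.1, hfa.2.trans (hinc.isBigO_comp hpos ha hat)⟩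
  · exact ⟨(hdec.isBigO_comp hpos ha hat).trans hfa.1, hfb.2.trans (hdec.isBigO_comp hpos ht htb)⟩

end Comparison

lemma isTheta_one_principal_Icc {Ψ : ℝ → ℝ} (hpos : ∀ x, 0 ≤ x → 0 < Ψ x)
    (hmono : EssInc Ψ ∨ EssDec Ψ) {R : ℝ} (hR : 0 ≤ R) :
    Ψ =Θ[𝓟 (Icc 0 R)] fun _ => (1 : ℝ) := by
  rw [isTheta_principal_iff (fun x hx => (hpos x hx.1).le) fun _ _ => zero_le_one]
  simp only [mul_one]
  have hΨ0 := hpos 0 le_rfl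
  have hΨR := hpos R hR
  rcases hmono with ⟨A, hA, h⟩ | ⟨A, hA, h⟩
  · refine ⟨A⁻¹ * Ψ 0, by positivity, A * Ψ R, by positivity, fun x hx => ⟨?_, h x R hx.1 hx.2⟩⟩
    exact (inv_mul_le_iff₀ hA).2 (h 0 x le_rfl hx.1)
  · refine ⟨A⁻¹ * Ψ R, by positivity, A * Ψ 0, by positivity, fun x hx => ⟨?_, h 0 x le_rfl hx.1⟩⟩
    exact (inv_mul_le_iff₀ hA).2 (h x R hx.1 hx.2)

lemma isTheta_comp_div_principal_Icc {Φ Ψ : ℝ → ℝ} (hΦpos : ∀ x, 0 ≤ x → 0 < Φ x)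
    (hΦmono : EssInc Φ ∨ EssDec Φ) (hΨpos : ∀ x, 0 ≤ x → 0 < Ψ x) (hΨmono : EssInc Ψ ∨ EssDec Ψ)
    {X : ℝ} (hX : 0 ≤ X) : (fun x => Ψ (x / Φ x)) =Θ[𝓟 (Icc 0 X)] Ψ := by
  obtain ⟨m, hm, _, _, hΦm⟩ := (isTheta_principal_iff (fun x hx => (hΦpos x hx.1).le)
    fun _ _ => zero_le_one).1 (isTheta_one_principal_Icc hΦpos hΦmono hX)
  have hmaps : Tendsto (fun x => x / Φ x) (𝓟 (Icc 0 X)) (𝓟 (Icc 0 (X / m))) := by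
    refine tendsto_principal_principal.2 fun x hx => ⟨div_nonneg hx.1 (hΦpos x hx.1).le, ?_⟩
    have hmx := (hΦm x hx).1
    rw [mul_one] at hmx
    exact div_le_div₀ hX hx.2 hm hmx
  have hΨ := isTheta_one_principal_Icc hΨpos hΨmono (div_nonneg hX hm.le)
  exact IsTheta.trans ⟨hΨ.1.comp_tendsto hmaps, hΨ.2.comp_tendsto hmaps⟩
    (isTheta_one_principal_Icc hΨpos hΨmono hX).symm

lemma InL.isTheta_comp_div {Φ Ψ : ℝ → ℝ} (hΦ : InL Φ) (hΨ : InL Ψ) :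
    (fun x => Ψ (x / Φ x)) =Θ[𝓟 (Ici 0)] Ψ := by
  obtain ⟨hpos, hmono, hd⟩ := hΨ
  obtain ⟨X₀, hX₀⟩ := eventually_atTop.1 hΦ.eventually_sqrt_le_div_le_sq
  set X := max X₀ 0
  have hX : 0 ≤ X := le_max_right _ _
  have hfar : (fun x => Ψ (x / Φ x)) =Θ[𝓟 (Ici X)] Ψ := by
    have hle : 𝓟 (Ici X) ≤ 𝓟 (Ici 0) := principal_mono.2 (Ici_subset_Ici.2 hX)
    refine isTheta_comp_of_le_of_le hpos hmono (eventually_principal.2 fun x _ => sqrt_nonneg x)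
      ?_ ?_ ((hd.isTheta_comp_sqrt hpos).mono hle) ((hd.isTheta_comp_sq hpos).mono hle) <;>
    refine eventually_principal.2 fun x hx => ?_
    exacts [(hX₀ x (le_of_max_le_left hx)).1, (hX₀ x (le_of_max_le_left hx)).2]
  refine ((isTheta_comp_div_principal_Icc hΦ.1 hΦ.2.1 hpos hmono hX).sup hfar).mono ?_
  rw [sup_principal, Icc_union_Ici_eq_Ici hX]

theorem stmt4 (Φ Ψ : ℝ → ℝ) (hΦ : InL Φ) (hΨ : InL Ψ) :
    ∃ C > (0:ℝ), ∀ x : ℝ, 0 ≤ x →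
      C⁻¹ * Ψ x ≤ Ψ (x / Φ x) ∧ Ψ (x / Φ x) ≤ C * Ψ x := by
  have hΨx : ∀ x ∈ Ici (0 : ℝ), 0 ≤ Ψ x := fun x hx => (hΨ.1 x hx).le
  have hΨdiv : ∀ x ∈ Ici (0 : ℝ), 0 ≤ Ψ (x / Φ x) :=
    fun x hx => hΨx _ (div_nonneg hx (hΦ.1 x hx).le)
  obtain ⟨c, hc, C, -, h⟩ := (isTheta_principal_iff hΨdiv hΨx).1 (hΦ.isTheta_comp_div hΨ)
  refine ⟨max C c⁻¹, by positivity, fun x hx => ⟨?_, ?_⟩⟩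
  · calc (max C c⁻¹)⁻¹ * Ψ x ≤ c * Ψ x := by
          gcongr
          · exact hΨx x hx
          · exact inv_le_of_inv_le₀ hc (le_max_right _ _)
      _ ≤ Ψ (x / Φ x) := (h x hx).1
  · calc Ψ (x / Φ x) ≤ C * Ψ x := (h x hx).2
      _ ≤ max C c⁻¹ * Ψ x := by gcongr; exacts [hΨx x hx, le_max_left _ _]
end

section
/- Let 0 < p < ∞ and Ψ ∈ 𝓛. Then the function Θ(x) = x^p·Ψ(x) is essentially increasing on [0,∞): there exists C = C(Ψ, p) > 0 such that x^p·Ψ(x) ≤ C·y^p·Ψ(y) whenever 0 ≤ x ≤ y. -/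
open MeasureTheory Real Set

/-! If `Ψ` is essentially increasing, so is the product `x ^ p * Ψ x`. If `Ψ` is essentially
decreasing, it is bounded above and below by positive constants on `[0, 2]`, which settles small
arguments. For `2 ≤ x ≤ y` choose `n` with `x ^ 2 ^ n ≤ y ≤ x ^ 2 ^ (n + 1)`: iterating
`Ψ t ≤ C Ψ (t²)` gives `Ψ x ≤ C ^ (n + 1) D Ψ y`, and the geometric factor `C ^ (n + 1)` is
absorbed by `(y / x) ^ p ≥ (2 ^ p) ^ (2 ^ n - 1)`, which grows doubly exponentially in `n`. -/

def EssIncOn (g : ℝ → ℝ) (s : Set ℝ) : Prop :=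
  ∃ C > (0:ℝ), ∀ x ∈ s, ∀ y ∈ s, x ≤ y → g x ≤ C * g y

lemma essIncOn_Ici_zero_iff {g : ℝ → ℝ} : EssIncOn g (Ici 0) ↔ EssInc g := by
  simp only [EssIncOn, EssInc, mem_Ici]
  refine exists_congr fun C => and_congr_right fun _ => ⟨?_, ?_⟩
  · exact fun h x y hx hxy => h x hx y (hx.trans hxy) hxy
  · exact fun h x hx y _ hxy => h x y hx hxy

lemma MonotoneOn.essIncOn {g : ℝ → ℝ} {s : Set ℝ} (hg : MonotoneOn g s) : EssIncOn g s :=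
  ⟨1, one_pos, fun x hx y hy hxy => by simpa using hg hx hy hxy⟩

lemma EssIncOn.mul {f g : ℝ → ℝ} {s : Set ℝ} (hf : EssIncOn f s) (hg : EssIncOn g s)
    (hf0 : ∀ x ∈ s, 0 ≤ f x) (hg0 : ∀ x ∈ s, 0 ≤ g x) :
    EssIncOn (fun x => f x * g x) s := by
  obtain ⟨A, hA, hfA⟩ := hf
  obtain ⟨B, hB, hgB⟩ := hg
  refine ⟨A * B, mul_pos hA hB, fun x hx y hy hxy => ?_⟩
  calc f x * g x ≤ (A * f y) * (B * g y) :=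
        mul_le_mul (hfA x hx y hy hxy) (hgB x hx y hy hxy) (hg0 x hx)
          (mul_nonneg hA.le (hf0 y hy))
    _ = A * B * (f y * g y) := by ring

lemma EssIncOn.union_Icc_Ici {g : ℝ → ℝ} {b a : ℝ} (hl : EssIncOn g (Icc b a))
    (hr : EssIncOn g (Ici a)) (hg0 : ∀ x ∈ Ici b, 0 ≤ g x) : EssIncOn g (Ici b) := by
  obtain ⟨A, hA, hgA⟩ := hl
  obtain ⟨B, hB, hgB⟩ := hr
  refine ⟨A + B + A * B, by positivity, fun x hx y hy hxy => ?_⟩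
  have hgy : 0 ≤ g y := hg0 y hy
  rcases le_total y a with hya | hay
  · calc g x ≤ A * g y := hgA x ⟨hx, hxy.trans hya⟩ y ⟨hy, hya⟩ hxy
      _ ≤ (A + B + A * B) * g y := by gcongr; nlinarith
  rcases le_total a x with hax | hxa
  · calc g x ≤ B * g y := hgB x hax y hay hxy
      _ ≤ (A + B + A * B) * g y := by gcongr; nlinarith
  calc g x ≤ A * g a := hgA x ⟨hx, hxa⟩ a ⟨hx.trans hxa, le_rfl⟩ hxa
    _ ≤ A * (B * g y) := by gcongr; exact hgB a (mem_Ici.2 le_rfl) y hay hay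
    _ ≤ (A + B + A * B) * g y := by nlinarith

lemma EssDec.essIncOn_Icc {Ψ : ℝ → ℝ} (h : EssDec Ψ) {a : ℝ} (h0 : 0 < Ψ 0) (ha : 0 < Ψ a) :
    EssIncOn Ψ (Icc 0 a) := by
  obtain ⟨D, hD, hdec⟩ := h
  refine ⟨D ^ 2 * Ψ 0 / Ψ a, by positivity, fun x hx y hy _ => ?_⟩
  have hx0 : Ψ x ≤ D * Ψ 0 := hdec 0 x le_rfl hx.1
  have hay : Ψ a ≤ D * Ψ y := hdec y a hy.1 hy.2
  calc Ψ x ≤ D * Ψ 0 := hx0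
    _ = D ^ 2 * Ψ 0 / Ψ a * (Ψ a / D) := by field_simp
    _ ≤ D ^ 2 * Ψ 0 / Ψ a * Ψ y := by
        gcongr
        rwa [div_le_iff₀' hD]

lemma apply_le_pow_mul_apply_pow_two_pow {Ψ : ℝ → ℝ} {C : ℝ} (hC : 0 ≤ C)
    (h : ∀ x, 0 ≤ x → Ψ x ≤ C * Ψ (x ^ 2)) (n : ℕ) {x : ℝ} (hx : 0 ≤ x) :
    Ψ x ≤ C ^ n * Ψ (x ^ 2 ^ n) := by
  induction n with
  | zero => simp
  | succ n ih =>
    calc Ψ x ≤ C ^ n * Ψ (x ^ 2 ^ n) := ih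
      _ ≤ C ^ n * (C * Ψ ((x ^ 2 ^ n) ^ 2)) := by gcongr; exact h _ (by positivity)
      _ = C ^ (n + 1) * Ψ (x ^ 2 ^ (n + 1)) := by
          rw [← pow_mul, ← pow_succ, ← mul_assoc, ← pow_succ]

lemma exists_pow_two_pow_le_le_pow_two_pow {x y : ℝ} (hx : 1 < x) (hxy : x ≤ y) :
    ∃ n : ℕ, x ^ 2 ^ n ≤ y ∧ y ≤ x ^ 2 ^ (n + 1) := by
  have bracket : ∀ m : ℕ, y ≤ x ^ 2 ^ m → ∃ n : ℕ, x ^ 2 ^ n ≤ y ∧ y ≤ x ^ 2 ^ (n + 1) := by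
    intro m
    induction m with
    | zero => exact fun hy => ⟨0, by simpa using hxy, by norm_num at hy ⊢; nlinarith⟩
    | succ m ih =>
      intro hy
      rcases le_total y (x ^ 2 ^ m) with hym | hmy
      · exact ih hym
      · exact ⟨m, hmy, hy⟩
  obtain ⟨m, hm⟩ := pow_unbounded_of_one_lt y hx
  exact bracket m (hm.le.trans (pow_le_pow_right₀ hx.le Nat.lt_two_pow_self.le))

lemma exists_pow_le_mul_pow (k : ℕ) {r : ℝ} (hr : 1 < r) :
    ∃ K > (0:ℝ), ∀ m : ℕ, (m : ℝ) ^ k ≤ K * r ^ m := by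
  obtain ⟨K, hK⟩ := (tendsto_pow_const_div_const_pow_of_one_lt k hr).bddAbove_range
  refine ⟨max K 1, by positivity, fun m => ?_⟩
  have hrm : 0 < r ^ m := by positivity
  have hm : (m : ℝ) ^ k / r ^ m ≤ max K 1 := (hK ⟨m, rfl⟩).trans (le_max_left _ _)
  rwa [div_le_iff₀ hrm] at hm

lemma exists_pow_mul_le_mul_pow_two_pow {C r : ℝ} (hC : 0 ≤ C) (hr : 1 < r) :
    ∃ K > (0:ℝ), ∀ n : ℕ, ∀ a ≥ r, C ^ n * a ≤ K * a ^ 2 ^ n := by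
  obtain ⟨k, hk⟩ := pow_unbounded_of_one_lt C one_lt_two
  obtain ⟨K, hK, hKr⟩ := exists_pow_le_mul_pow k hr
  refine ⟨K * r, by positivity, fun n a ha => ?_⟩
  have hCn : C ^ n ≤ K * r * r ^ (2 ^ n - 1) :=
    calc C ^ n ≤ ((2:ℝ) ^ k) ^ n := pow_le_pow_left₀ hC hk.le n
      _ = ((2 ^ n : ℕ) : ℝ) ^ k := by push_cast; ring
      _ ≤ K * r ^ 2 ^ n := hKr _
      _ = K * r * r ^ (2 ^ n - 1) := by
          rw [mul_assoc, mul_pow_sub_one (by positivity)]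
  calc C ^ n * a ≤ K * r * r ^ (2 ^ n - 1) * a := by gcongr; linarith
    _ ≤ K * r * a ^ (2 ^ n - 1) * a := by gcongr; linarith
    _ = K * r * a ^ 2 ^ n := by rw [mul_assoc, pow_sub_one_mul (by positivity)]

lemma essIncOn_rpow_mul_Ici_two {Ψ : ℝ → ℝ} {p C : ℝ} (hp : 0 < p) (hC : 0 < C)
    (hΨ0 : ∀ x, 0 ≤ x → 0 ≤ Ψ x) (hdbl : ∀ x, 0 ≤ x → Ψ x ≤ C * Ψ (x ^ 2)) (hdec : EssDec Ψ) :
    EssIncOn (fun x => x ^ p * Ψ x) (Ici 2) := by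
  obtain ⟨D, hD, hdec⟩ := hdec
  have hr : 1 < (2:ℝ) ^ p := one_lt_rpow one_lt_two hp
  obtain ⟨K, hK, hKa⟩ := exists_pow_mul_le_mul_pow_two_pow hC.le hr
  refine ⟨D * C * K, by positivity, fun x (hx : 2 ≤ x) y _ hxy => ?_⟩
  have hx0 : 0 ≤ x := by linarith
  obtain ⟨n, hny, hyn⟩ := exists_pow_two_pow_le_le_pow_two_pow (by linarith) hxy
  have hΨxy : Ψ x ≤ C ^ (n + 1) * D * Ψ y :=
    calc Ψ x ≤ C ^ (n + 1) * Ψ (x ^ 2 ^ (n + 1)) :=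
          apply_le_pow_mul_apply_pow_two_pow hC.le hdbl _ hx0
      _ ≤ C ^ (n + 1) * (D * Ψ y) := by gcongr; exact hdec y _ (by linarith) hyn
      _ = C ^ (n + 1) * D * Ψ y := by ring
  have hxp : C ^ (n + 1) * x ^ p ≤ C * K * y ^ p :=
    calc C ^ (n + 1) * x ^ p = C * (C ^ n * x ^ p) := by ring
      _ ≤ C * (K * (x ^ p) ^ 2 ^ n) :=
          mul_le_mul_of_nonneg_left (hKa n _ (rpow_le_rpow zero_le_two hx hp.le)) hC.le
      _ = C * K * (x ^ 2 ^ n) ^ p := by rw [rpow_pow_comm hx0, mul_assoc]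
      _ ≤ C * K * y ^ p := by gcongr
  have hΨy : 0 ≤ D * Ψ y := mul_nonneg hD.le (hΨ0 y (by linarith))
  calc x ^ p * Ψ x ≤ x ^ p * (C ^ (n + 1) * D * Ψ y) := by gcongr
    _ = C ^ (n + 1) * x ^ p * (D * Ψ y) := by ring
    _ ≤ C * K * y ^ p * (D * Ψ y) := by gcongr
    _ = D * C * K * (y ^ p * Ψ y) := by ring

theorem stmt5 (p : ℝ) (hp : 0 < p) (Ψ : ℝ → ℝ) (hΨ : InL Ψ) :
    ∃ C > (0:ℝ), ∀ x y : ℝ, 0 ≤ x → x ≤ y →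
      x ^ p * Ψ x ≤ C * (y ^ p * Ψ y) := by
  obtain ⟨hpos, hmono, _, _, C, hC, hdbl⟩ := hΨ
  have hΨ0 : ∀ x ∈ Ici (0:ℝ), 0 ≤ Ψ x := fun x hx => (hpos x hx).le
  have hpow0 : ∀ x ∈ Ici (0:ℝ), 0 ≤ x ^ p := fun x hx => rpow_nonneg hx p
  have hpow : MonotoneOn (fun x : ℝ => x ^ p) (Ici 0) :=
    monotoneOn_rpow_Ici_of_exponent_nonneg hp.le
  refine essIncOn_Ici_zero_iff.1 ?_
  rcases hmono with hinc | hdec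
  · exact hpow.essIncOn.mul (essIncOn_Ici_zero_iff.2 hinc) hpow0 hΨ0
  · have hsmall : EssIncOn (fun x => x ^ p * Ψ x) (Icc 0 2) :=
      (hpow.mono Icc_subset_Ici_self).essIncOn.mul
        (hdec.essIncOn_Icc (hpos 0 le_rfl) (hpos 2 zero_le_two))
        (fun x hx => hpow0 x hx.1) (fun x hx => hΨ0 x hx.1)
    have hlarge : EssIncOn (fun x => x ^ p * Ψ x) (Ici 2) :=
      essIncOn_rpow_mul_Ici_two hp hC hΨ0 (fun x hx => (hdbl x hx).2) hdec
    exact hsmall.union_Icc_Ici hlarge fun x hx => mul_nonneg (hpow0 x hx) (hΨ0 x hx)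
end

section
/- Let 0 < β < ∞ and Ψ ∈ 𝓛. Then the function θ(x) = (1−x)^β·Ψ(1/(1−x)) is essentially decreasing on [0,1): there exists C = C(Ψ, β) > 0 such that (1−y)^β·Ψ(1/(1−y)) ≤ C·(1−x)^β·Ψ(1/(1−x)) whenever 0 ≤ x ≤ y < 1. -/
open MeasureTheory Real Set

/-!
Put `t = 1/(1-x)`, so that `(1-x)^β Ψ(1/(1-x)) = Ψ(t)/t^β` and `x ↦ t` maps `[0,1)` increasingly
onto `[1,∞)`; it suffices that `g(t) = Ψ(t)/t^β` is essentially decreasing on `[1,∞)`. This is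
clear when `Ψ` is essentially decreasing. When `Ψ` is essentially increasing, `c Ψ(s²) ≤ Ψ(s)` and
`s^β ≥ 1/c` for `s ≥ a` give `g(s²) ≤ g(s)` there, while `Ψ(t) ≤ A Ψ(s²)` gives
`g(t) ≤ (A/c) g(s)` for `s ≤ t ≤ s²`; iterating along `s, s², s⁴, …` makes `g` essentially
decreasing on `[a,∞)`, and on the compact interval `[1,a]` it is bounded above and away from zero.
-/

def EssDecOn (f : ℝ → ℝ) (S : Set ℝ) : Prop :=
  ∃ C > (0:ℝ), ∀ s ∈ S, ∀ t ∈ S, s ≤ t → f t ≤ C * f s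

theorem EssDecOn.mono {f : ℝ → ℝ} {S T : Set ℝ} (hf : EssDecOn f T) (hST : S ⊆ T) :
    EssDecOn f S := by
  obtain ⟨C, hC, h⟩ := hf
  exact ⟨C, hC, fun s hs t ht hst => h s (hST hs) t (hST ht) hst⟩

theorem essDecOn_of_bounds {f : ℝ → ℝ} {S : Set ℝ} {m M : ℝ} (hm : 0 < m)
    (hlow : ∀ s ∈ S, m ≤ f s) (hup : ∀ t ∈ S, f t ≤ M) : EssDecOn f S := by
  refine ⟨max (M / m) 1, by positivity, fun s hs t ht _ => ?_⟩
  calc f t ≤ M / m * m := by rw [div_mul_cancel₀ M hm.ne']; exact hup t ht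
    _ ≤ max (M / m) 1 * f s := by gcongr; exacts [le_max_left _ _, hlow s hs]

theorem essDecOn_Ici_of_Icc_of_Ici {f : ℝ → ℝ} {a b : ℝ} (hf : ∀ s ∈ Ici a, 0 ≤ f s)
    (hIcc : EssDecOn f (Icc a b)) (hIci : EssDecOn f (Ici b)) : EssDecOn f (Ici a) := by
  obtain ⟨B, hB, hB'⟩ := hIcc
  obtain ⟨K, hK, hK'⟩ := hIci
  refine ⟨K * B + K + B, by positivity, fun s hs t ht hst => ?_⟩
  have hfs := hf s hs
  rcases le_or_gt b s with hbs | hsb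
  · exact (hK' s hbs t (hbs.trans hst) hst).trans
      (mul_le_mul_of_nonneg_right (by nlinarith) hfs)
  rcases le_or_gt t b with htb | hbt
  · exact (hB' s ⟨hs, hsb.le⟩ t ⟨ht, htb⟩ hst).trans
      (mul_le_mul_of_nonneg_right (by nlinarith) hfs)
  calc f t ≤ K * f b := hK' b self_mem_Ici t hbt.le hbt.le
    _ ≤ K * (B * f s) := by gcongr; exact hB' s ⟨hs, hsb.le⟩ b ⟨hs.trans hsb.le, le_rfl⟩ hsb.le
    _ ≤ (K * B + K + B) * f s := by
      rw [← mul_assoc]; exact mul_le_mul_of_nonneg_right (by linarith) hfs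

/-- Every `t ≥ s` lies below some `s^(2^n)`, and `[s, s^(2^(n+1))]` is `[s, s²]` together with
`[s², (s²)^(2^n)]`. -/
theorem essDecOn_Ici_of_sq_le {g : ℝ → ℝ} {a K : ℝ} (ha : 1 < a) (hK : 0 < K)
    (hstep : ∀ s t, a ≤ s → s ≤ t → t ≤ s ^ 2 → g t ≤ K * g s)
    (hsq : ∀ s, a ≤ s → g (s ^ 2) ≤ g s) : EssDecOn g (Ici a) := by
  have hs_le_sq : ∀ s, a ≤ s → s ≤ s ^ 2 := fun s hs => by nlinarith
  have key : ∀ n : ℕ, ∀ s, a ≤ s → ∀ t, s ≤ t → t ≤ s ^ 2 ^ n → g t ≤ K * g s := by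
    intro n
    induction n with
    | zero =>
      intro s hs t hst hts
      exact hstep s t hs hst ((pow_one s ▸ hts).trans (hs_le_sq s hs))
    | succ n ih =>
      intro s hs t hst hts
      rcases le_or_gt t (s ^ 2) with hts2 | hst2
      · exact hstep s t hs hst hts2
      calc g t ≤ K * g (s ^ 2) :=
            ih (s ^ 2) (hs.trans (hs_le_sq s hs)) t hst2.le (by rwa [← pow_mul, ← pow_succ'])
        _ ≤ K * g s := by gcongr; exact hsq s hs
  refine ⟨K, hK, fun s hs t _ hst => ?_⟩
  have hs1 : 1 < s := ha.trans_le hs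
  obtain ⟨n, hn⟩ := pow_unbounded_of_one_lt t hs1
  exact key n s hs t hst (hn.le.trans (pow_le_pow_right₀ hs1.le Nat.lt_two_pow_self.le))

theorem essDecOn_div_rpow_of_essDec {β : ℝ} {Ψ : ℝ → ℝ} (hβ : 0 ≤ β)
    (hΨ : ∀ x, 0 ≤ x → 0 ≤ Ψ x) (hdec : EssDec Ψ) :
    EssDecOn (fun t => Ψ t / t ^ β) (Ioi 0) := by
  obtain ⟨A, hA, hdec⟩ := hdec
  refine ⟨A, hA, fun s (hs : 0 < s) t _ hst => ?_⟩
  calc Ψ t / t ^ β ≤ A * Ψ s / t ^ β :=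
        div_le_div_of_nonneg_right (hdec s t hs.le hst) (rpow_nonneg (hs.le.trans hst) β)
    _ ≤ A * Ψ s / s ^ β :=
        div_le_div_of_nonneg_left (mul_nonneg hA.le (hΨ s hs.le)) (rpow_pos_of_pos hs β)
          (rpow_le_rpow hs.le hst hβ)
    _ = A * (Ψ s / s ^ β) := mul_div_assoc _ _ _

theorem essDecOn_div_rpow_of_essInc {β c : ℝ} {Ψ : ℝ → ℝ} (hβ : 0 < β)
    (hΨ : ∀ x, 0 ≤ x → 0 < Ψ x) (hinc : EssInc Ψ) (hc : 0 < c)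
    (hdb : ∀ x, 0 ≤ x → c * Ψ (x ^ 2) ≤ Ψ x) :
    EssDecOn (fun t => Ψ t / t ^ β) (Ici 1) := by
  obtain ⟨A, hA, hinc⟩ := hinc
  obtain ⟨a, ha⟩ := Filter.eventually_atTop.1
    (((tendsto_rpow_atTop hβ).eventually_ge_atTop c⁻¹).and (Filter.eventually_gt_atTop 1))
  have ha1 : 1 < a := (ha a le_rfl).2
  have hsq : ∀ s, 0 ≤ s → Ψ (s ^ 2) ≤ c⁻¹ * Ψ s := fun s hs => by
    rw [inv_mul_eq_div, le_div_iff₀' hc]; exact hdb s hs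
  refine essDecOn_Ici_of_Icc_of_Ici (b := a)
    (fun t (ht : 1 ≤ t) => div_nonneg (hΨ t (by linarith)).le (by positivity)) ?_
    (essDecOn_Ici_of_sq_le ha1 (K := A * c⁻¹) (by positivity) ?_ ?_)
  · refine essDecOn_of_bounds (m := Ψ 1 / A / a ^ β) (M := A * Ψ a)
      (div_pos (div_pos (hΨ 1 zero_le_one) hA) (by positivity)) ?_ ?_
    · rintro s ⟨hs, hsa⟩
      refine div_le_div₀ (hΨ s (by linarith)).le ?_ (by positivity) (rpow_le_rpow (by linarith) hsa hβ.le)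
      rw [div_le_iff₀' hA]
      exact hinc 1 s zero_le_one hs
    · rintro t ⟨ht, hta⟩
      exact (div_le_self (hΨ t (by linarith)).le (one_le_rpow ht hβ.le)).trans
        (hinc t a (by linarith) hta)
  · intro s t hs hst hts
    have hs0 : 0 < s := by linarith
    calc Ψ t / t ^ β ≤ A * Ψ (s ^ 2) / s ^ β :=
          div_le_div₀ (by positivity [hΨ (s ^ 2) (by positivity)]) (hinc t _ (by linarith) hts)
            (by positivity) (rpow_le_rpow hs0.le hst hβ.le)
      _ ≤ A * (c⁻¹ * Ψ s) / s ^ β := by gcongr; exact hsq s hs0.le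
      _ = A * c⁻¹ * (Ψ s / s ^ β) := by ring
  · intro s hs
    have hs0 : 0 < s := by linarith
    have hsβ : 0 < s ^ β := rpow_pos_of_pos hs0 β
    calc Ψ (s ^ 2) / (s ^ 2) ^ β ≤ s ^ β * Ψ s / (s ^ β) ^ 2 := by
          rw [rpow_pow_comm hs0.le]
          gcongr
          exact (hsq s hs0.le).trans (mul_le_mul_of_nonneg_right (ha s hs).1 (hΨ s hs0.le).le)
      _ = Ψ s / s ^ β := by field_simp

theorem stmt6 (β : ℝ) (hβ : 0 < β) (Ψ : ℝ → ℝ) (hΨ : InL Ψ) :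
    ∃ C > (0:ℝ), ∀ x y : ℝ, 0 ≤ x → x ≤ y → y < 1 →
      (1 - y) ^ β * Ψ (1 / (1 - y)) ≤ C * ((1 - x) ^ β * Ψ (1 / (1 - x))) := by
  obtain ⟨hpos, hmono, c, hc, _, _, hdb⟩ := hΨ
  have hg : EssDecOn (fun t => Ψ t / t ^ β) (Ici 1) := by
    rcases hmono with hinc | hdec
    · exact essDecOn_div_rpow_of_essInc hβ hpos hinc hc fun x hx => (hdb x hx).1
    · exact (essDecOn_div_rpow_of_essDec hβ.le (fun x hx => (hpos x hx).le) hdec).mono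
        (Ici_subset_Ioi.2 one_pos)
  obtain ⟨C, hC, hg⟩ := hg
  refine ⟨C, hC, fun x y hx hxy hy => ?_⟩
  have hθ : ∀ z : ℝ, z < 1 → (1 - z) ^ β * Ψ (1 / (1 - z)) = Ψ (1 / (1 - z)) / (1 / (1 - z)) ^ β :=
    fun z hz => by rw [one_div, inv_rpow (by linarith), div_inv_eq_mul, mul_comm]
  have hx1 : 0 < 1 - x := by linarith
  have hs : (1:ℝ) ≤ 1 / (1 - x) := by rw [le_div_iff₀ hx1]; linarith
  have hst : 1 / (1 - x) ≤ 1 / (1 - y) := one_div_le_one_div_of_le (by linarith) (by linarith)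
  rw [hθ x (hxy.trans_lt hy), hθ y hy]
  exact hg _ hs _ (hs.trans hst) hst
end

section
/- There exists a function Ψ : [0,∞) → (0,∞) satisfying Ψ(x) ≍ Ψ(x²) for all x ≥ 0 which is neither essentially increasing nor essentially decreasing. -/
open MeasureTheory Real Set

/-! With `g t = t * sin (log (t + 1))`, take `Ψ = exp ∘ g ∘ loglog`. Squaring `x` moves `loglog x`
by at most `log 2`, and `g` is `2`-Lipschitz on `[0, ∞)` because its oscillation slows down
logarithmically; hence `log Ψ (x ^ 2) - log Ψ x` is bounded and `Ψ` is doubling. But `g` reaches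
both `t` and `-t` for arbitrarily large `t`, so `log Ψ` has unbounded rises and unbounded drops. -/

lemma exp_le_mul_exp_iff {a b C : ℝ} (hC : 0 < C) : exp a ≤ C * exp b ↔ a ≤ log C + b := by
  rw [← exp_log hC, ← exp_add, exp_le_exp, exp_log hC]

section ExpComp

variable {φ : ℝ → ℝ}

lemma doubling_exp_comp (B : ℝ) (hφ : ∀ x, 0 ≤ x → |φ (x ^ 2) - φ x| ≤ B) :
    Doubling (fun x => exp (φ x)) := by
  refine ⟨exp (-B), exp_pos _, exp B, exp_pos _, fun x hx => ?_⟩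
  obtain ⟨hlow, hupp⟩ := abs_le.1 (hφ x hx)
  simp only [← exp_add, exp_le_exp]
  constructor <;> linarith

lemma not_essInc_exp_comp (hφ : ∀ M, ∃ x y, 0 ≤ x ∧ x ≤ y ∧ M ≤ φ x - φ y) :
    ¬ EssInc (fun x => exp (φ x)) := by
  rintro ⟨C, hC, hinc⟩
  obtain ⟨x, y, hx, hxy, hM⟩ := hφ (log C + 1)
  have := (exp_le_mul_exp_iff hC).1 (hinc x y hx hxy)
  linarith

lemma not_essDec_exp_comp (hφ : ∀ M, ∃ x y, 0 ≤ x ∧ x ≤ y ∧ M ≤ φ y - φ x) :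
    ¬ EssDec (fun x => exp (φ x)) := by
  rintro ⟨C, hC, hdec⟩
  obtain ⟨x, y, hx, hxy, hM⟩ := hφ (log C + 1)
  have := (exp_le_mul_exp_iff hC).1 (hdec x y hx hxy)
  linarith

end ExpComp

noncomputable def slowOscillation (t : ℝ) : ℝ := t * sin (log (t + 1))

lemma log_add_one_sub_log_add_one_le {s t : ℝ} (ht : 0 ≤ t) (hts : t ≤ s) :
    log (s + 1) - log (t + 1) ≤ (s - t) / (t + 1) := by
  have ht1 : 0 < t + 1 := by linarith
  rw [← log_div (by linarith) ht1.ne']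
  calc log ((s + 1) / (t + 1)) ≤ (s + 1) / (t + 1) - 1 :=
        log_le_sub_one_of_pos (div_pos (by linarith) ht1)
    _ = (s - t) / (t + 1) := by field_simp; ring

lemma abs_slowOscillation_sub_le {s t : ℝ} (ht : 0 ≤ t) (hts : t ≤ s) :
    |slowOscillation s - slowOscillation t| ≤ 2 * (s - t) := by
  have hlog_mono : log (t + 1) ≤ log (s + 1) := log_le_log (by linarith) (by linarith)
  have hsin : t * |sin (log (s + 1)) - sin (log (t + 1))| ≤ s - t :=
    calc t * |sin (log (s + 1)) - sin (log (t + 1))|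
        ≤ t * ((s - t) / (t + 1)) := by
          gcongr
          refine (abs_sin_sub_sin_le _ _).trans ?_
          rw [abs_of_nonneg (by linarith)]
          exact log_add_one_sub_log_add_one_le ht hts
      _ ≤ s - t := by
          rw [mul_div_assoc', div_le_iff₀ (by linarith)]
          nlinarith
  calc |slowOscillation s - slowOscillation t|
      = |(s - t) * sin (log (s + 1)) + t * (sin (log (s + 1)) - sin (log (t + 1)))| := by
        rw [slowOscillation, slowOscillation]; ring_nf
    _ ≤ |(s - t) * sin (log (s + 1))| + |t * (sin (log (s + 1)) - sin (log (t + 1)))| :=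
        abs_add_le _ _
    _ = |s - t| * |sin (log (s + 1))| + t * |sin (log (s + 1)) - sin (log (t + 1))| := by
        rw [abs_mul, abs_mul, abs_of_nonneg ht]
    _ ≤ (s - t) * 1 + (s - t) := by
        rw [abs_of_nonneg (by linarith)]
        gcongr
        exact abs_sin_le_one _
    _ = 2 * (s - t) := by ring

lemma exists_ge_sin_log_add_one_eq (θ M : ℝ) : ∃ t ≥ M, sin (log (t + 1)) = sin θ := by
  set n := ⌈M - θ⌉₊
  refine ⟨exp (θ + n * (2 * π)) - 1, ?_, ?_⟩
  · have hn : M - θ ≤ n := Nat.le_ceil _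
    nlinarith [add_one_le_exp (θ + n * (2 * π)), pi_gt_three, n.cast_nonneg (α := ℝ)]
  · rw [sub_add_cancel, log_exp, sin_add_nat_mul_two_pi]

lemma exists_ge_slowOscillation_eq_self (M : ℝ) : ∃ t ≥ M, slowOscillation t = t := by
  obtain ⟨t, htM, ht⟩ := exists_ge_sin_log_add_one_eq (π / 2) M
  exact ⟨t, htM, by rw [slowOscillation, ht, sin_pi_div_two, mul_one]⟩

lemma exists_ge_slowOscillation_eq_neg (M : ℝ) : ∃ t ≥ M, slowOscillation t = -t := by
  obtain ⟨t, htM, ht⟩ := exists_ge_sin_log_add_one_eq (-(π / 2)) M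
  exact ⟨t, htM, by rw [slowOscillation, ht, sin_neg, sin_pi_div_two, mul_neg_one]⟩

lemma exists_large_drop_slowOscillation (M : ℝ) :
    ∃ s t, 0 ≤ s ∧ s ≤ t ∧ M ≤ slowOscillation s - slowOscillation t := by
  obtain ⟨s, hs, hs_eq⟩ := exists_ge_slowOscillation_eq_self (max M 0)
  obtain ⟨t, ht, ht_eq⟩ := exists_ge_slowOscillation_eq_neg s
  refine ⟨s, t, le_of_max_le_right hs, ht, ?_⟩
  rw [hs_eq, ht_eq]
  linarith [le_of_max_le_left hs, le_of_max_le_right hs]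

lemma exists_large_rise_slowOscillation (M : ℝ) :
    ∃ s t, 0 ≤ s ∧ s ≤ t ∧ M ≤ slowOscillation t - slowOscillation s := by
  obtain ⟨s, hs, hs_eq⟩ := exists_ge_slowOscillation_eq_neg (max M 0)
  obtain ⟨t, ht, ht_eq⟩ := exists_ge_slowOscillation_eq_self s
  refine ⟨s, t, le_of_max_le_right hs, ht, ?_⟩
  rw [hs_eq, ht_eq]
  linarith [le_of_max_le_left hs, le_of_max_le_right hs]

noncomputable def loglog (x : ℝ) : ℝ := log (log (max x (exp 1)))

lemma one_le_log_max_exp_one (x : ℝ) : 1 ≤ log (max x (exp 1)) :=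
  (log_exp 1).symm.le.trans (log_le_log (exp_pos 1) (le_max_right _ _))

lemma loglog_nonneg (x : ℝ) : 0 ≤ loglog x :=
  log_nonneg (one_le_log_max_exp_one x)

lemma loglog_exp_exp {t : ℝ} (ht : 0 ≤ t) : loglog (exp (exp t)) = t := by
  have : exp 1 ≤ exp (exp t) := exp_le_exp.2 (by linarith [add_one_le_exp t])
  rw [loglog, max_eq_left this, log_exp, log_exp]

lemma loglog_le_loglog_sq {x : ℝ} (hx : 0 ≤ x) :
    loglog x ≤ loglog (x ^ 2) ∧ loglog (x ^ 2) ≤ loglog x + 1 := by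
  set m := max x (exp 1)
  have he : 1 ≤ exp 1 := one_le_exp zero_le_one
  have hm : exp 1 ≤ m := le_max_right _ _
  have hlog_m : 1 ≤ log m := one_le_log_max_exp_one x
  have hm_le : m ≤ max (x ^ 2) (exp 1) := by
    refine max_le ?_ (le_max_right _ _)
    rcases le_total x 1 with h | h
    · exact (h.trans he).trans (le_max_right _ _)
    · exact (le_self_pow₀ h two_ne_zero).trans (le_max_left _ _)
  have hle_sq : max (x ^ 2) (exp 1) ≤ m ^ 2 :=
    max_le (pow_le_pow_left₀ hx (le_max_left _ _) 2)
      (hm.trans (le_self_pow₀ (he.trans hm) two_ne_zero))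
  constructor
  · exact log_le_log (by linarith) (log_le_log (by linarith) hm_le)
  · calc loglog (x ^ 2) ≤ log (log (m ^ 2)) :=
          log_le_log (by linarith [one_le_log_max_exp_one (x ^ 2)])
            (log_le_log (by linarith) hle_sq)
      _ = log 2 + loglog x := by
          rw [log_pow, Nat.cast_ofNat, log_mul two_ne_zero (by linarith), loglog]
      _ ≤ loglog x + 1 := by linarith [log_two_lt_d9]

lemma exists_loglog_of_exists {P : ℝ → ℝ → Prop} (h : ∃ s t, 0 ≤ s ∧ s ≤ t ∧ P s t) :
    ∃ x y, 0 ≤ x ∧ x ≤ y ∧ P (loglog x) (loglog y) := by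
  obtain ⟨s, t, hs, hst, hP⟩ := h
  refine ⟨exp (exp s), exp (exp t), (exp_pos _).le, exp_le_exp.2 (exp_le_exp.2 hst), ?_⟩
  rwa [loglog_exp_exp hs, loglog_exp_exp (hs.trans hst)]

theorem stmt7 :
    ∃ Ψ : ℝ → ℝ, (∀ x : ℝ, 0 ≤ x → 0 < Ψ x) ∧ Doubling Ψ ∧
      ¬ EssInc Ψ ∧ ¬ EssDec Ψ := by
  refine ⟨fun x => exp (slowOscillation (loglog x)), fun x _ => exp_pos _,
    doubling_exp_comp 2 fun x hx => ?_,
    not_essInc_exp_comp fun M => exists_loglog_of_exists (exists_large_drop_slowOscillation M),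
    not_essDec_exp_comp fun M => exists_loglog_of_exists (exists_large_rise_slowOscillation M)⟩
  obtain ⟨hle, hle_add⟩ := loglog_le_loglog_sq hx
  linarith [abs_slowOscillation_sub_le (loglog_nonneg x) hle]
end

section
/- Let 0 < p < ∞, Ψ ∈ 𝓛, and μ a finite positive Borel measure on the unit disc 𝔻. Then the quantity ‖f‖ = (∫_𝔻 |f|^p Ψ(|f|) dμ)^{1/p} satisfies a quasi-triangle inequality: there exists K = K(p, Ψ) ≥ 1 such that ‖f + g‖ ≤ K(‖f‖ + ‖g‖) for all measurable f, g with ‖f‖, ‖g‖ < ∞. -/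
open MeasureTheory Real Set
open scoped ENNReal NNReal

/-- The unit disc in `ℂ`. -/
noncomputable def diskD : Set ℂ := Metric.ball 0 1

/-- The Carleson square `S(a)` (with `S(0) = 𝔻`). -/
noncomputable def cSq (a : ℂ) : Set ℂ :=
  if a = 0 then diskD else
    {z ∈ diskD | ‖a‖ ≤ ‖z‖ ∧
      |Complex.arg a - Complex.arg z| < (1 - ‖a‖) / 2}

/-- `ω(S) = ∫_S ω dA` where `dA` is the normalized area measure. -/
noncomputable def wInt (ω : ℝ → ℝ) (S : Set ℂ) : ℝ :=
  (1 / Real.pi) * ∫ z in S, ω (‖z‖) ∂volume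

/-- `‖f‖^p_{A^p_{ω,Ψ}} = ∫_𝔻 |f|^p Ψ(|f|) ω dA`, as an extended real. -/
noncomputable def apNormE (p : ℝ) (ω Ψ : ℝ → ℝ) (f : ℂ → ℂ) : ℝ≥0∞ :=
  ENNReal.ofReal (1 / Real.pi) *
    ∫⁻ z in diskD, ENNReal.ofReal
      (‖f z‖ ^ p * Ψ (‖f z‖) * ω (‖z‖)) ∂volume
/-!
Write `φ(t) = t ^ p * Ψ t`. The point is that `φ` is essentially increasing and
`φ(2t) ≲ φ(t)`; then `|f + g| ≤ 2 max(|f|, |g|)` gives `φ(|f + g|) ≲ φ(|f|) + φ(|g|)`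
pointwise, and integrating and taking `1/p`-th powers gives the quasi-triangle inequality.

For essentially increasing `Ψ` both facts are immediate (doubling handles `Ψ(2t)` for `t ≥ 2`).
For essentially decreasing `Ψ`, monotonicity of `φ` comes from the doubling condition:
`Ψ(x) ≲ Ψ(x²)`, so once `x ^ p` dominates the doubling constant, `φ(x) ≤ φ(x²)`, and
walking up the chain `x, x², x⁴, …` reaches any `y ≥ x` with a uniform constant.
-/

lemma essInc_of_le_mul_below_of_le_mul_above {φ : ℝ → ℝ} {T K₁ K₂ : ℝ}
    (hφ : ∀ x, 0 ≤ x → 0 ≤ φ x) (hK₁ : 1 ≤ K₁) (hK₂ : 1 ≤ K₂)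
    (h₁ : ∀ x y, 0 ≤ x → x ≤ y → y ≤ T → φ x ≤ K₁ * φ y)
    (h₂ : ∀ x y, T ≤ x → x ≤ y → φ x ≤ K₂ * φ y) :
    EssInc φ := by
  refine ⟨K₁ * K₂, by nlinarith, fun x y hx hxy => ?_⟩
  have hy := hφ y (hx.trans hxy)
  rcases le_total T x with hTx | hxT
  · calc φ x ≤ K₂ * φ y := h₂ x y hTx hxy
      _ ≤ K₁ * K₂ * φ y := by gcongr; exact le_mul_of_one_le_left (by linarith) hK₁
  rcases le_total y T with hyT | hTy
  · calc φ x ≤ K₁ * φ y := h₁ x y hx hxy hyT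
      _ ≤ K₁ * K₂ * φ y := by rw [mul_assoc]; gcongr; exact le_mul_of_one_le_left hy hK₂
  · calc φ x ≤ K₁ * φ T := h₁ x T hx hxT le_rfl
      _ ≤ K₁ * (K₂ * φ y) := mul_le_mul_of_nonneg_left (h₂ T y le_rfl hTy) (by linarith)
      _ = K₁ * K₂ * φ y := by ring

variable {Ψ : ℝ → ℝ} {p : ℝ}

namespace EssInc

lemma rpow_mul (hp : 0 ≤ p) (hpos : ∀ x, 0 ≤ x → 0 < Ψ x) (h : EssInc Ψ) :
    EssInc fun t => t ^ p * Ψ t := by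
  obtain ⟨C, hC, hinc⟩ := h
  refine ⟨C, hC, fun x y hx hxy => ?_⟩
  calc x ^ p * Ψ x ≤ y ^ p * (C * Ψ y) :=
        mul_le_mul (rpow_le_rpow hx hxy hp) (hinc x y hx hxy) (hpos x hx).le
          (rpow_nonneg (hx.trans hxy) p)
    _ = C * (y ^ p * Ψ y) := by ring

lemma exists_apply_two_mul_le (hpos : ∀ x, 0 ≤ x → 0 < Ψ x) (h : EssInc Ψ) (hd : Doubling Ψ) :
    ∃ D > 0, ∀ t, 0 ≤ t → Ψ (2 * t) ≤ D * Ψ t := by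
  obtain ⟨C, hC, hinc⟩ := h
  obtain ⟨c, hc, _, -, hdb⟩ := hd
  have hΨ0 := hpos 0 le_rfl
  have hΨ4 := hpos 4 (by norm_num)
  refine ⟨max (C / c) (C * C * Ψ 4 / Ψ 0), lt_max_of_lt_left (by positivity), fun t ht => ?_⟩
  have hΨt := hpos t ht
  rcases le_or_gt 2 t with ht2 | ht2
  · have hlarge : Ψ (2 * t) ≤ C / c * Ψ t := by
      rw [div_mul_eq_mul_div, le_div_iff₀ hc]
      calc Ψ (2 * t) * c ≤ C * Ψ (t ^ 2) * c := by
            gcongr; exact hinc _ _ (by linarith) (by nlinarith)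
        _ ≤ C * Ψ t := by rw [mul_assoc, mul_comm (Ψ _)]; gcongr; exact (hdb t ht).1
    exact hlarge.trans (by gcongr; exact le_max_left _ _)
  · have hsmall : Ψ (2 * t) ≤ C * C * Ψ 4 / Ψ 0 * Ψ t := by
      rw [div_mul_eq_mul_div, le_div_iff₀ hΨ0]
      calc Ψ (2 * t) * Ψ 0 ≤ (C * Ψ 4) * (C * Ψ t) :=
            mul_le_mul (hinc _ _ (by linarith) (by linarith)) (hinc 0 t le_rfl ht) hΨ0.le
              (by positivity)
        _ = C * C * Ψ 4 * Ψ t := by ring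
    exact hsmall.trans (by gcongr; exact le_max_right _ _)

end EssInc

namespace EssDec

section

variable {C C₂ : ℝ}

lemma rpow_mul_le_of_le_of_le_sq (hp : 0 ≤ p) (hpos : ∀ x, 0 ≤ x → 0 < Ψ x)
    (hdec : ∀ x y, 0 ≤ x → x ≤ y → Ψ y ≤ C * Ψ x) (hsq : ∀ x, 0 ≤ x → Ψ x ≤ C₂ * Ψ (x ^ 2))
    (hC₂ : 0 ≤ C₂) {x y : ℝ} (hx : 0 ≤ x) (hxy : x ≤ y) (hyx : y ≤ x ^ 2) :
    x ^ p * Ψ x ≤ C * C₂ * (y ^ p * Ψ y) := by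
  have hy := hx.trans hxy
  calc x ^ p * Ψ x ≤ y ^ p * (C₂ * (C * Ψ y)) :=
        mul_le_mul (rpow_le_rpow hx hxy hp)
          ((hsq x hx).trans (by gcongr; exact hdec y _ hy hyx)) (hpos x hx).le (rpow_nonneg hy p)
    _ = C * C₂ * (y ^ p * Ψ y) := by ring

lemma rpow_mul_le_rpow_mul_sq (hpos : ∀ x, 0 ≤ x → 0 < Ψ x)
    (hsq : ∀ x, 0 ≤ x → Ψ x ≤ C₂ * Ψ (x ^ 2)) {x : ℝ} (hx : 0 ≤ x) (hC₂x : C₂ ≤ x ^ p) :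
    x ^ p * Ψ x ≤ (x ^ 2) ^ p * Ψ (x ^ 2) := by
  have := hpos (x ^ 2) (by positivity)
  calc x ^ p * Ψ x ≤ x ^ p * (C₂ * Ψ (x ^ 2)) := by gcongr; exact hsq x hx
    _ ≤ x ^ p * (x ^ p * Ψ (x ^ 2)) := by gcongr
    _ = (x ^ 2) ^ p * Ψ (x ^ 2) := by rw [← mul_assoc, ← mul_rpow hx hx, sq]

lemma rpow_mul_le_of_threshold_le (hp : 0 < p) (hpos : ∀ x, 0 ≤ x → 0 < Ψ x)
    (hdec : ∀ x y, 0 ≤ x → x ≤ y → Ψ y ≤ C * Ψ x) (hsq : ∀ x, 0 ≤ x → Ψ x ≤ C₂ * Ψ (x ^ 2))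
    (hC₂ : 0 ≤ C₂) {T : ℝ} (hT : 1 < T) (hC₂T : C₂ ≤ T ^ p) {x y : ℝ} (hx : T ≤ x)
    (hxy : x ≤ y) : x ^ p * Ψ x ≤ C * C₂ * (y ^ p * Ψ y) := by
  have hx1 : 1 ≤ x := by linarith
  obtain ⟨n, hn⟩ := pow_unbounded_of_one_lt y (hT.trans_le hx)
  replace hn : y ≤ x ^ 2 ^ n := hn.le.trans (pow_le_pow_right₀ hx1 Nat.lt_two_pow_self.le)
  induction n generalizing x with
  | zero =>
    exact rpow_mul_le_of_le_of_le_sq hp.le hpos hdec hsq hC₂ (by linarith) hxy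
      (hn.trans (by simpa using le_self_pow₀ hx1 two_ne_zero))
  | succ n ih =>
    rcases le_or_gt y (x ^ 2) with hyx | hyx
    · exact rpow_mul_le_of_le_of_le_sq hp.le hpos hdec hsq hC₂ (by linarith) hxy hyx
    · have hx2 : x ≤ x ^ 2 := le_self_pow₀ hx1 two_ne_zero
      calc x ^ p * Ψ x ≤ (x ^ 2) ^ p * Ψ (x ^ 2) :=
            rpow_mul_le_rpow_mul_sq hpos hsq (by linarith)
              (hC₂T.trans (rpow_le_rpow (by linarith) hx hp.le))
        _ ≤ C * C₂ * (y ^ p * Ψ y) :=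
            ih (hx.trans hx2) hyx.le (hx1.trans hx2) (by rwa [pow_succ', pow_mul] at hn)

lemma rpow_mul_le_of_le_of_le (hp : 0 ≤ p) (hpos : ∀ x, 0 ≤ x → 0 < Ψ x)
    (hdec : ∀ x y, 0 ≤ x → x ≤ y → Ψ y ≤ C * Ψ x) {T x y : ℝ} (hx : 0 ≤ x) (hxy : x ≤ y)
    (hyT : y ≤ T) : x ^ p * Ψ x ≤ C * C * Ψ 0 / Ψ T * (y ^ p * Ψ y) := by
  have hy := hx.trans hxy
  rw [div_mul_eq_mul_div, le_div_iff₀ (hpos T (hy.trans hyT))]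
  calc x ^ p * Ψ x * Ψ T ≤ y ^ p * (C * Ψ 0) * (C * Ψ y) :=
        mul_le_mul (mul_le_mul (rpow_le_rpow hx hxy hp) (hdec 0 x le_rfl hx) (hpos x hx).le
          (rpow_nonneg hy p)) (hdec y T hy hyT) (hpos T (hy.trans hyT)).le
          (mul_nonneg (rpow_nonneg hy p) ((hpos 0 le_rfl).le.trans (hdec 0 0 le_rfl le_rfl)))
    _ = C * C * Ψ 0 * (y ^ p * Ψ y) := by ring

end

lemma rpow_mul (hp : 0 < p) (hpos : ∀ x, 0 ≤ x → 0 < Ψ x) (h : EssDec Ψ) (hd : Doubling Ψ) :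
    EssInc fun t => t ^ p * Ψ t := by
  obtain ⟨C, -, hdec⟩ := h
  obtain ⟨_, -, C₂, -, hdb⟩ := hd
  have hsq x hx := (hdb x hx).2
  have hΨ0 := hpos 0 le_rfl
  have hC : 1 ≤ C := le_of_mul_le_mul_right (by simpa using hdec 0 0 le_rfl le_rfl) hΨ0
  have hC₂ : 1 ≤ C₂ := le_of_mul_le_mul_right (by simpa using hsq 0 le_rfl) hΨ0
  set T := max 2 (C₂ ^ p⁻¹)
  have hT : 0 ≤ T := le_max_of_le_left zero_le_two
  have hC₂T : C₂ ≤ T ^ p := calc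
    C₂ = (C₂ ^ p⁻¹) ^ p := (rpow_inv_rpow (by linarith) hp.ne').symm
    _ ≤ T ^ p := rpow_le_rpow (by positivity) (le_max_right _ _) hp.le
  refine essInc_of_le_mul_below_of_le_mul_above (T := T) (fun x hx => ?_) ?_
    (one_le_mul_of_one_le_of_one_le hC hC₂)
    (fun x y hx hxy hyT => rpow_mul_le_of_le_of_le hp.le hpos hdec hx hxy hyT)
    (fun x y hTx hxy => rpow_mul_le_of_threshold_le hp hpos hdec hsq (by linarith)
      (lt_max_of_lt_left one_lt_two) hC₂T hTx hxy)
  · have := hpos x hx; positivity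
  · rw [one_le_div (hpos T hT)]
    calc Ψ T ≤ C * Ψ 0 := hdec 0 T le_rfl hT
      _ ≤ C * C * Ψ 0 := by rw [mul_assoc]; exact le_mul_of_one_le_left (by positivity) hC

end EssDec

namespace InL

lemma rpow_mul_nonneg (hΨ : InL Ψ) {t : ℝ} (ht : 0 ≤ t) : 0 ≤ t ^ p * Ψ t :=
  mul_nonneg (rpow_nonneg ht p) (hΨ.1 t ht).le

lemma essInc_rpow_mul (hp : 0 < p) (hΨ : InL Ψ) : EssInc fun t => t ^ p * Ψ t :=
  hΨ.2.1.elim (·.rpow_mul hp.le hΨ.1) (·.rpow_mul hp hΨ.1 hΨ.2.2)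

lemma exists_apply_two_mul_le (hΨ : InL Ψ) : ∃ D > 0, ∀ t, 0 ≤ t → Ψ (2 * t) ≤ D * Ψ t := by
  rcases hΨ.2.1 with h | ⟨C, hC, hdec⟩
  · exact h.exists_apply_two_mul_le hΨ.1 hΨ.2.2
  · exact ⟨C, hC, fun t ht => hdec t (2 * t) ht (by linarith)⟩

lemma exists_rpow_mul_le_add (hp : 0 < p) (hΨ : InL Ψ) :
    ∃ C, 1 ≤ C ∧ ∀ s a b, 0 ≤ s → 0 ≤ a → 0 ≤ b → s ≤ a + b →
      s ^ p * Ψ s ≤ C * (a ^ p * Ψ a + b ^ p * Ψ b) := by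
  obtain ⟨K, hK, hφ⟩ := hΨ.essInc_rpow_mul hp
  obtain ⟨D, hD, hdbl⟩ := hΨ.exists_apply_two_mul_le
  refine ⟨max (K * 2 ^ p * D) 1, le_max_right _ _, fun s a b hs ha hb hsab => ?_⟩
  set m := max a b
  have hm : 0 ≤ m := ha.trans (le_max_left _ _)
  have hφm : m ^ p * Ψ m ≤ a ^ p * Ψ a + b ^ p * Ψ b := by
    rcases le_total a b with hab | hab
    · simpa [m, max_eq_right hab] using hΨ.rpow_mul_nonneg ha
    · simpa [m, max_eq_left hab] using hΨ.rpow_mul_nonneg hb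
  calc s ^ p * Ψ s ≤ K * ((2 * m) ^ p * Ψ (2 * m)) :=
        hφ s (2 * m) hs (by linarith [le_max_left a b, le_max_right a b])
    _ = K * 2 ^ p * (m ^ p * Ψ (2 * m)) := by rw [mul_rpow zero_le_two hm]; ring
    _ ≤ K * 2 ^ p * (m ^ p * (D * Ψ m)) := by gcongr; exact hdbl m hm
    _ = K * 2 ^ p * D * (m ^ p * Ψ m) := by ring
    _ ≤ max (K * 2 ^ p * D) 1 * (a ^ p * Ψ a + b ^ p * Ψ b) :=
        mul_le_mul (le_max_left _ _) hφm (hΨ.rpow_mul_nonneg hm) (by positivity)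

end InL

lemma lintegral_rpow_le_of_le_mul_add {α : Type*} [MeasurableSpace α] {ν : Measure α}
    {F G H : α → ℝ≥0∞} {c : ℝ≥0∞} {r : ℝ} (hr : 0 ≤ r) (hc : c ≠ ∞) (hF : Measurable F)
    (h : ∀ x, H x ≤ c * (F x + G x)) :
    (∫⁻ x, H x ∂ν) ^ r ≤ (2 * c) ^ r * ((∫⁻ x, F x ∂ν) ^ r + (∫⁻ x, G x ∂ν) ^ r) := by
  have hint : ∫⁻ x, H x ∂ν ≤ c * (∫⁻ x, F x ∂ν + ∫⁻ x, G x ∂ν) := calc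
    ∫⁻ x, H x ∂ν ≤ ∫⁻ x, c * (F x + G x) ∂ν := lintegral_mono h
    _ = c * (∫⁻ x, F x ∂ν + ∫⁻ x, G x ∂ν) := by
      rw [lintegral_const_mul' _ _ hc, lintegral_add_left hF]
  calc (∫⁻ x, H x ∂ν) ^ r ≤ (c * (∫⁻ x, F x ∂ν + ∫⁻ x, G x ∂ν)) ^ r :=
        ENNReal.rpow_le_rpow hint hr
    _ = c ^ r * (∫⁻ x, F x ∂ν + ∫⁻ x, G x ∂ν) ^ r := ENNReal.mul_rpow_of_nonneg _ _ hr
    _ ≤ c ^ r * (2 ^ r * ((∫⁻ x, F x ∂ν) ^ r + (∫⁻ x, G x ∂ν) ^ r)) := by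
        gcongr; exact ENNReal.add_rpow_le_two_rpow_mul_rpow_add_rpow _ _ hr
    _ = (2 * c) ^ r * ((∫⁻ x, F x ∂ν) ^ r + (∫⁻ x, G x ∂ν) ^ r) := by
        rw [ENNReal.mul_rpow_of_nonneg _ _ hr]; ring

theorem stmt8_general (p : ℝ) (hp : 0 < p) (Ψ : ℝ → ℝ) (hΨ : InL Ψ) (hΨm : Measurable Ψ)
    (μ : Measure ℂ) :
    ∃ K : ℝ, 1 ≤ K ∧ ∀ f g : ℂ → ℂ, Measurable f → Measurable g →
      (∫⁻ z in diskD, ENNReal.ofReal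
          (‖f z‖ ^ p * Ψ (‖f z‖)) ∂μ) ≠ ⊤ →
      (∫⁻ z in diskD, ENNReal.ofReal
          (‖g z‖ ^ p * Ψ (‖g z‖)) ∂μ) ≠ ⊤ →
      (∫⁻ z in diskD, ENNReal.ofReal
          (‖f z + g z‖ ^ p * Ψ (‖f z + g z‖)) ∂μ) ^ (1/p) ≤
        ENNReal.ofReal K *
          ((∫⁻ z in diskD, ENNReal.ofReal
              (‖f z‖ ^ p * Ψ (‖f z‖)) ∂μ) ^ (1/p) +
           (∫⁻ z in diskD, ENNReal.ofReal
              (‖g z‖ ^ p * Ψ (‖g z‖)) ∂μ) ^ (1/p)) := by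
  obtain ⟨C, hC, hpt⟩ := hΨ.exists_rpow_mul_le_add hp
  have hr : 0 ≤ 1 / p := by positivity
  refine ⟨(2 * C) ^ (1 / p), one_le_rpow (by linarith) hr, fun f g hf _ _ _ => ?_⟩
  have hK : ENNReal.ofReal ((2 * C) ^ (1 / p)) = (2 * ENNReal.ofReal C) ^ (1 / p) := by
    rw [← ENNReal.ofReal_rpow_of_nonneg (by linarith) hr, ENNReal.ofReal_mul zero_le_two,
      ENNReal.ofReal_ofNat]
  rw [hK]
  refine lintegral_rpow_le_of_le_mul_add hr ENNReal.ofReal_ne_top (by fun_prop) fun z => ?_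
  rw [← ENNReal.ofReal_add (hΨ.rpow_mul_nonneg (norm_nonneg _))
      (hΨ.rpow_mul_nonneg (norm_nonneg _)),
    ← ENNReal.ofReal_mul (by linarith)]
  exact ENNReal.ofReal_le_ofReal (hpt _ _ _ (norm_nonneg _) (norm_nonneg _) (norm_nonneg _)
    (norm_add_le _ _))

theorem stmt8 (p : ℝ) (hp : 0 < p) (Ψ : ℝ → ℝ) (hΨ : InL Ψ) (hΨm : Measurable Ψ)
    (μ : Measure ℂ) [IsFiniteMeasure μ] :
    ∃ K : ℝ, 1 ≤ K ∧ ∀ f g : ℂ → ℂ, Measurable f → Measurable g →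
      (∫⁻ z in diskD, ENNReal.ofReal
          (‖f z‖ ^ p * Ψ (‖f z‖)) ∂μ) ≠ ⊤ →
      (∫⁻ z in diskD, ENNReal.ofReal
          (‖g z‖ ^ p * Ψ (‖g z‖)) ∂μ) ≠ ⊤ →
      (∫⁻ z in diskD, ENNReal.ofReal
          (‖f z + g z‖ ^ p * Ψ (‖f z + g z‖)) ∂μ) ^ (1/p) ≤
        ENNReal.ofReal K *
          ((∫⁻ z in diskD, ENNReal.ofReal
              (‖f z‖ ^ p * Ψ (‖f z‖)) ∂μ) ^ (1/p) +
           (∫⁻ z in diskD, ENNReal.ofReal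
              (‖g z‖ ^ p * Ψ (‖g z‖)) ∂μ) ^ (1/p)) :=
  stmt8_general p hp Ψ hΨ hΨm μ
end

section
/- Let ω be a radial weight. Then ω ∈ 𝒟̌ (i.e., there exist K > 1 and C > 1 with ω̂(r) ≥ C·ω̂(1 − (1−r)/K) for all 0 ≤ r < 1) if and only if there exist C > 0 and β > 0 such that ω̂(t) ≤ C·((1−t)/(1−r))^β·ω̂(r) for all 0 ≤ r ≤ t < 1. -/
open MeasureTheory Real Set

/-- Tail integral of a radial weight. -/
noncomputable def omHat (ω : ℝ → ℝ) (r : ℝ) : ℝ := ∫ s in r..1, ω s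

/-- The class `𝒟̂` of radial weights with doubling tails. -/
def Dhat (ω : ℝ → ℝ) : Prop :=
  ∃ C : ℝ, 1 ≤ C ∧ ∀ r ∈ Set.Ico (0:ℝ) 1, omHat ω r ≤ C * omHat ω ((1 + r) / 2)

/-- The class `𝒟̌` of radial weights with reverse-doubling tails. -/
def Dcheck (ω : ℝ → ℝ) : Prop :=
  ∃ K : ℝ, 1 < K ∧ ∃ C : ℝ, 1 < C ∧ ∀ r ∈ Set.Ico (0:ℝ) 1,
    C * omHat ω (1 - (1 - r) / K) ≤ omHat ω r

/-!
Iterating reverse doubling `C ω̂(1 - (1 - r)/K) ≤ ω̂(r)` gives `ω̂(1 - (1 - r)/Kⁿ) ≤ C⁻ⁿ ω̂(r)`; since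
`ω̂` is decreasing, choosing `n` with `Kⁿ ≤ (1 - r)/(1 - t) < Kⁿ⁺¹` turns this into the power bound
with exponent `β = log_K C`. Conversely, the power bound with `(1 - t)/(1 - r) = 1/K` and `K` so
large that `C K^{-β} ≤ 1/2` is reverse doubling with constant `2`.
-/

lemma omHat_nonneg {ω : ℝ → ℝ} (hnn : ∀ r ∈ Ico (0:ℝ) 1, 0 ≤ ω r) {r : ℝ} (hr : r ∈ Ico (0:ℝ) 1) :
    0 ≤ omHat ω r := by
  rw [omHat, intervalIntegral.integral_of_le hr.2.le, integral_Ioc_eq_integral_Ioo]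
  exact setIntegral_nonneg measurableSet_Ioo fun s hs => hnn s ⟨hr.1.trans hs.1.le, hs.2⟩

lemma antitoneOn_omHat {ω : ℝ → ℝ} (hnn : ∀ r ∈ Ico (0:ℝ) 1, 0 ≤ ω r)
    (hint : IntervalIntegrable ω volume 0 1) : AntitoneOn (omHat ω) (Ico 0 1) := by
  intro a ha b hb hab
  have hsub : ∀ c d : ℝ, 0 ≤ c → c ≤ d → d ≤ 1 → IntervalIntegrable ω volume c d :=
    fun c d hc hcd hd => hint.mono_set <| by
      rw [uIcc_of_le hcd, uIcc_of_le zero_le_one]; exact Icc_subset_Icc hc hd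
  have hsplit : (∫ s in a..b, ω s) + omHat ω b = omHat ω a :=
    intervalIntegral.integral_add_adjacent_intervals (hsub a b ha.1 hab hb.2.le)
      (hsub b 1 hb.1 hb.2.le le_rfl)
  have hmid : 0 ≤ ∫ s in a..b, ω s :=
    intervalIntegral.integral_nonneg hab fun s hs => hnn s ⟨ha.1.trans hs.1, hs.2.trans_lt hb.2⟩
  linarith

lemma one_sub_div_mem_Ico {r K : ℝ} (hr : r < 1) (hK : 1 ≤ K) : 1 - (1 - r) / K ∈ Ico r 1 := by
  have h1r : 0 < 1 - r := by linarith
  have hle : (1 - r) / K ≤ 1 - r := div_le_self h1r.le hK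
  have hpos : 0 < (1 - r) / K := div_pos h1r (by linarith)
  constructor <;> linarith

section ReverseDoubling

variable {g : ℝ → ℝ} {K C : ℝ}

lemma pow_mul_le_of_reverse_doubling (hK : 1 ≤ K) (hC : 0 ≤ C)
    (h : ∀ r ∈ Ico (0:ℝ) 1, C * g (1 - (1 - r) / K) ≤ g r) (n : ℕ) :
    ∀ r ∈ Ico (0:ℝ) 1, C ^ n * g (1 - (1 - r) / K ^ n) ≤ g r := by
  induction n with
  | zero => simp
  | succ n ih =>
    intro r hr
    have hr' := one_sub_div_mem_Ico hr.2 hK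
    have hstep := ih _ ⟨hr.1.trans hr'.1, hr'.2⟩
    rw [sub_sub_cancel, div_div] at hstep
    calc C ^ (n + 1) * g (1 - (1 - r) / K ^ (n + 1))
        = C * (C ^ n * g (1 - (1 - r) / (K * K ^ n))) := by rw [pow_succ', pow_succ']; ring
      _ ≤ C * g (1 - (1 - r) / K) := mul_le_mul_of_nonneg_left hstep hC
      _ ≤ g r := h r hr

lemma le_rpow_mul_of_reverse_doubling (hanti : AntitoneOn g (Ico 0 1))
    (hnn : ∀ r ∈ Ico (0:ℝ) 1, 0 ≤ g r) (hK : 1 < K) (hC : 1 < C)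
    (h : ∀ r ∈ Ico (0:ℝ) 1, C * g (1 - (1 - r) / K) ≤ g r) {r t : ℝ} (hr : 0 ≤ r) (hrt : r ≤ t)
    (ht : t < 1) : g t ≤ C * ((1 - t) / (1 - r)) ^ logb K C * g r := by
  have h1t : 0 < 1 - t := by linarith
  have hC0 : 0 < C := by linarith
  have hr1 : r ∈ Ico (0:ℝ) 1 := ⟨hr, hrt.trans_lt ht⟩
  set Q := (1 - r) / (1 - t)
  have hQ : 1 ≤ Q := (one_le_div h1t).2 (by linarith)
  obtain ⟨n, hnQ, hQn⟩ := exists_nat_pow_near hQ hK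
  have hKn : 0 < K ^ n := by positivity
  set p := 1 - (1 - r) / K ^ n
  have hp : p ∈ Ico r 1 := one_sub_div_mem_Ico hr1.2 (one_le_pow₀ hK.le)
  have hpt : p ≤ t := by
    have : 1 - t ≤ (1 - r) / K ^ n := by
      rw [le_div_iff₀ hKn, mul_comm]; exact (le_div_iff₀ h1t).1 hnQ
    linarith
  have hQβ : Q ^ logb K C ≤ C ^ (n + 1) := calc
    Q ^ logb K C ≤ (K ^ (n + 1)) ^ logb K C :=
      rpow_le_rpow (by linarith) hQn.le (logb_pos hK hC).le
    _ = C ^ (n + 1) := by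
      rw [← rpow_pow_comm (by positivity), rpow_logb (by positivity) hK.ne' (by positivity)]
  have hgp : C ^ n * g p ≤ g r := pow_mul_le_of_reverse_doubling hK.le (by positivity) h n r hr1
  calc g t ≤ g p := hanti ⟨hr.trans hp.1, hp.2⟩ ⟨hr.trans hrt, ht⟩ hpt
    _ ≤ C * (C ^ (n + 1))⁻¹ * g r := by
      rw [pow_succ', mul_inv, ← mul_assoc, mul_inv_cancel₀ (by positivity), one_mul,
        inv_mul_eq_div, le_div_iff₀ (by positivity), mul_comm]
      exact hgp
    _ ≤ C * (Q ^ logb K C)⁻¹ * g r := by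
      have := hnn r hr1
      gcongr
    _ = C * ((1 - t) / (1 - r)) ^ logb K C * g r := by
      rw [← inv_rpow (by linarith), inv_div]

lemma reverse_doubling_of_le_rpow_mul (hnn : ∀ r ∈ Ico (0:ℝ) 1, 0 ≤ g r) {β : ℝ} (hC : 0 < C)
    (hβ : 0 < β)
    (h : ∀ r t : ℝ, 0 ≤ r → r ≤ t → t < 1 → g t ≤ C * ((1 - t) / (1 - r)) ^ β * g r) :
    ∃ K, 1 < K ∧ ∃ C', 1 < C' ∧ ∀ r ∈ Ico (0:ℝ) 1, C' * g (1 - (1 - r) / K) ≤ g r := by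
  set K := 1 + (2 * C) ^ β⁻¹
  have hK : 1 < K := by have := rpow_pos_of_pos (by positivity : 0 < 2 * C) β⁻¹; linarith
  have hKβ : 2 * C * (K ^ β)⁻¹ ≤ 1 := by
    rw [mul_inv_le_iff₀ (rpow_pos_of_pos (by linarith) β), one_mul]
    calc 2 * C = ((2 * C) ^ β⁻¹) ^ β := (rpow_inv_rpow (by positivity) hβ.ne').symm
      _ ≤ K ^ β := rpow_le_rpow (by positivity) (by linarith) hβ.le
  refine ⟨K, hK, 2, one_lt_two, fun r hr => ?_⟩
  have ht := one_sub_div_mem_Ico hr.2 hK.le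
  have hbound := h r _ hr.1 ht.1 ht.2
  rw [sub_sub_cancel, div_div_cancel_left' (by linarith [hr.2]), inv_rpow (by linarith)]
    at hbound
  have hgr := hnn r hr
  calc 2 * g (1 - (1 - r) / K) ≤ 2 * C * (K ^ β)⁻¹ * g r := by linarith
    _ ≤ g r := mul_le_of_le_one_left hgr hKβ

end ReverseDoubling

theorem stmt11 (ω : ℝ → ℝ) (hnn : ∀ r ∈ Set.Ico (0:ℝ) 1, 0 ≤ ω r)
    (hint : IntervalIntegrable ω volume 0 1) :
    Dcheck ω ↔ ∃ C > (0:ℝ), ∃ β > (0:ℝ), ∀ r t : ℝ, 0 ≤ r → r ≤ t → t < 1 →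
      omHat ω t ≤ C * ((1 - t) / (1 - r)) ^ β * omHat ω r := by
  have hanti := antitoneOn_omHat hnn hint
  have hnn' : ∀ r ∈ Ico (0:ℝ) 1, 0 ≤ omHat ω r := fun r hr => omHat_nonneg hnn hr
  constructor
  · rintro ⟨K, hK, C, hC, h⟩
    exact ⟨C, by linarith, logb K C, logb_pos hK hC,
      fun r t hr hrt ht => le_rpow_mul_of_reverse_doubling hanti hnn' hK hC h hr hrt ht⟩
  · rintro ⟨C, hC, β, hβ, h⟩
    exact reverse_doubling_of_le_rpow_mul hnn' hC hβ h
end
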